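/- arXiv:1912.09725 — 8 statements merged into one kernel-verified Lean document; each statement's English description precedes it below -/
import Mathlib

section
/- Let v ∈ R^k be a vector whose coordinates v^(1), ..., v^(k) are linearly independent over Q, with v^(1) > 0. Then for every ε > 0 there exist vectors u_1, ..., u_k ∈ Z^k such that: (1) (u_1, ..., u_k) is a Z-basis of Z^k; (2) v = α_1 u_1 + ... + α_k u_k with all α_i > 0; (3) the angular distance between the ray through v and the ray through u_i is less than ε for each i; (4) the first coordinate of each u_i is positive. -/
/-!
For `c < ‖v‖` close to `‖v‖`, the open convex cone `K = {x | c‖x‖ < ⟪v, x⟫}` contains `v`, and all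
its vectors make an angle `< ε` with `v` and have positive first coordinate. Integer points near
`R • v`, for `R` large, give the rows of an integer matrix `A` with `det A ≠ 0`, rows in `K`, and
`v = ∑ βᵢ Aᵢ` with all `βᵢ > 0`.

If `|det A| > 1`, the rows do not span `ℤᵏ`; reducing an integer point outside their span modulo
the row lattice gives `x = ∑ γᵢ Aᵢ ∈ ℤᵏ` with `0 ≤ γᵢ < 1`, not all zero, so `x ∈ K`. Replacing the
row `Aⱼ` that maximizes `γⱼ / βⱼ` by `x` keeps `v` in the open cone of the rows, and multiplies
`|det A|` by `γⱼ < 1`. The maximum is strict because the `βᵢ` inherit the `ℚ`-linear independence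
of the coordinates of `v`. Descending on `|det A|` ends with a unimodular matrix.
-/

open Real Matrix Filter Topology
open scoped RealInnerProductSpace NNReal

lemma ConvexCone.sum_smul_mem {𝕜 M ι : Type*} [Field 𝕜] [LinearOrder 𝕜] [IsStrictOrderedRing 𝕜]
    [AddCommGroup M] [Module 𝕜 M] (C : ConvexCone 𝕜 M) {s : Finset ι} {w : ι → 𝕜} {z : ι → M}
    (hw : ∀ i ∈ s, 0 ≤ w i) (hw_pos : 0 < ∑ i ∈ s, w i) (hz : ∀ i ∈ s, z i ∈ C) :
    ∑ i ∈ s, w i • z i ∈ C := by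
  set S := ∑ i ∈ s, w i
  have hconv : ∑ i ∈ s, (w i / S) • z i ∈ C :=
    C.convex.sum_mem (fun i hi => div_nonneg (hw i hi) hw_pos.le)
      (by rw [← Finset.sum_div, div_self hw_pos.ne']) hz
  have hS : S • ∑ i ∈ s, (w i / S) • z i = ∑ i ∈ s, w i • z i := by
    simp only [Finset.smul_sum, smul_smul, mul_div_cancel₀ _ hw_pos.ne']
  exact hS ▸ C.smul_mem hw_pos hconv

namespace MaximallyIrrational

section NarrowCone

variable {E : Type*} [NormedAddCommGroup E] [InnerProductSpace ℝ E]

def narrowCone (v : E) (c : ℝ≥0) : ConvexCone ℝ E where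
  carrier := {x | c * ‖x‖ < ⟪v, x⟫}
  smul_mem' t ht x hx := by
    simp only [Set.mem_ofPred_eq, norm_smul, Real.norm_of_nonneg ht.le, real_inner_smul_right]
      at hx ⊢
    nlinarith
  add_mem' x hx y hy := by
    simp only [Set.mem_ofPred_eq, inner_add_right] at hx hy ⊢
    calc (c : ℝ) * ‖x + y‖ ≤ c * (‖x‖ + ‖y‖) := mul_le_mul_of_nonneg_left (norm_add_le x y) c.2
      _ < ⟪v, x⟫ + ⟪v, y⟫ := by linarith

lemma mem_narrowCone {v x : E} {c : ℝ≥0} : x ∈ narrowCone v c ↔ c * ‖x‖ < ⟪v, x⟫ := Iff.rfl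

lemma isOpen_narrowCone (v : E) (c : ℝ≥0) : IsOpen (narrowCone v c : Set E) :=
  isOpen_lt (continuous_const.mul continuous_norm) (continuous_const.inner continuous_id)

lemma mem_narrowCone_self {v : E} {c : ℝ≥0} (hc : c < ‖v‖) : v ∈ narrowCone v c := by
  rw [mem_narrowCone, real_inner_self_eq_norm_sq]
  nlinarith [c.2]

lemma angle_lt_of_mem_narrowCone {v x : E} {c : ℝ≥0} {θ : ℝ} (hθ₀ : 0 ≤ θ) (hθ : θ ≤ π)
    (hc : ‖v‖ * cos θ ≤ c) (hx : x ∈ narrowCone v c) : InnerProductGeometry.angle v x < θ := by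
  rw [mem_narrowCone] at hx
  have hvx : 0 < ‖v‖ * ‖x‖ := by
    have := real_inner_le_norm v x
    nlinarith [c.2, norm_nonneg x]
  have hcos : cos θ < ⟪v, x⟫ / (‖v‖ * ‖x‖) := by
    rw [lt_div_iff₀ hvx]
    nlinarith [norm_nonneg x]
  calc InnerProductGeometry.angle v x < arccos (cos θ) :=
        arccos_lt_arccos (neg_one_le_cos θ) hcos (div_le_one_of_le₀ (real_inner_le_norm v x) hvx.le)
    _ = θ := arccos_cos hθ₀ hθ

lemma inner_pos_of_mem_narrowCone {v w x : E} {c : ℝ≥0} (hw : ‖v - w‖ ≤ c)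
    (hx : x ∈ narrowCone v c) : 0 < ⟪w, x⟫ := by
  have h₁ := real_inner_le_norm (v - w) x
  have h₂ : ‖v - w‖ * ‖x‖ ≤ c * ‖x‖ := mul_le_mul_of_nonneg_right hw (norm_nonneg x)
  rw [mem_narrowCone] at hx
  rw [inner_sub_left] at h₁
  linarith

end NarrowCone

lemma norm_sub_single_lt {ι : Type*} [Fintype ι] [DecidableEq ι] {v : EuclideanSpace ℝ ι} {i : ι}
    (hi : v i ≠ 0) : ‖v - EuclideanSpace.single i (v i)‖ < ‖v‖ := by
  set w := EuclideanSpace.single i (v i)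
  have horth : ⟪w, v - w⟫ = 0 := by simp [w, EuclideanSpace.inner_single_left]
  have hpyth := norm_add_sq_eq_norm_sq_add_norm_sq_real horth
  rw [add_sub_cancel] at hpyth
  have hw : ‖w‖ = |v i| := by simp [w]
  have : 0 < ‖w‖ := by rw [hw]; exact abs_pos.mpr hi
  nlinarith [norm_nonneg (v - w), norm_nonneg v]

lemma sum_smul_update_eq {ι 𝕜 M : Type*} [Fintype ι] [DecidableEq ι] [Field 𝕜] [AddCommGroup M]
    [Module 𝕜 M] (β γ : ι → 𝕜) (p : ι → M) {j : ι} (hj : γ j ≠ 0) :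
    ∑ i, Function.update (β - (β j / γ j) • γ) j (β j / γ j) i •
        Function.update p j (∑ i, γ i • p i) i = ∑ i, β i • p i := by
  set t := β j / γ j
  have hterm : ∀ i, Function.update (β - t • γ) j t i • Function.update p j (∑ i, γ i • p i) i
      = Function.update (fun i => (β - t • γ) i • p i) j (t • ∑ i, γ i • p i) i := by
    intro i
    rcases eq_or_ne i j with rfl | hij <;> simp [*]
  have hsplit : ∑ i ∈ Finset.univ \ {j}, (β - t • γ) i • p i = ∑ i, (β - t • γ) i • p i := by
    rw [← Finset.sum_sdiff (Finset.subset_univ {j}), Finset.sum_singleton]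
    simp [t, div_mul_cancel₀ _ hj]
  rw [Finset.sum_congr rfl fun i _ => hterm i, Finset.sum_update_of_mem (Finset.mem_univ j), hsplit]
  simp only [Pi.sub_apply, Pi.smul_apply, sub_smul, Finset.sum_sub_distrib, smul_eq_mul, mul_smul,
    Finset.smul_sum]
  abel

lemma exists_index_lt_of_linearIndependent {ι : Type*} [Fintype ι] {β : ι → ℝ} (hβ : ∀ i, 0 < β i)
    (hβli : LinearIndependent ℚ β) {γ : ι → ℚ} (hγ₀ : ∀ i, 0 ≤ γ i) (hγ : γ ≠ 0) :
    ∃ j, 0 < γ j ∧ ∀ i ≠ j, γ i * β j < γ j * β i := by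
  obtain ⟨i₀, hi₀⟩ := Function.ne_iff.mp hγ
  obtain ⟨j, -, hj⟩ :=
    Finset.univ.exists_max_image (fun i => (γ i : ℝ) / β i) ⟨i₀, Finset.mem_univ _⟩
  have hγj : 0 < γ j := by
    have h₁ : (0 : ℝ) < γ i₀ / β i₀ :=
      div_pos (by exact_mod_cast (hγ₀ i₀).lt_of_ne' hi₀) (hβ i₀)
    exact_mod_cast (div_pos_iff_of_pos_right (hβ j)).mp (h₁.trans_le (hj i₀ (Finset.mem_univ _)))
  refine ⟨j, hγj, fun i hij => lt_of_le_of_ne ?_ fun heq => hγj.ne' ?_⟩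
  · have := hj i (Finset.mem_univ _)
    rwa [div_le_div_iff₀ (hβ i) (hβ j)] at this
  · refine ((LinearIndepOn.pair_iff β hij).mp (hβli.linearIndepOn _) (γ j) (-γ i) ?_).1
    simp only [Rat.smul_def, neg_smul]
    linarith

def intVec {ι : Type*} (x : ι → ℤ) : EuclideanSpace ℝ ι := WithLp.toLp 2 fun m => (x m : ℝ)

lemma sum_smul_intVec_apply {ι : Type*} [Fintype ι] (β : ι → ℝ) (A : Matrix ι ι ℤ) (m : ι) :
    (∑ i, β i • intVec (A i)) m = ∑ i, β i * A i m := by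
  simp [intVec]

def IsAdmissible {ι : Type*} [Fintype ι] (K : ConvexCone ℝ (EuclideanSpace ℝ ι))
    (v : EuclideanSpace ℝ ι) (A : Matrix ι ι ℤ) : Prop :=
  (∀ i, intVec (A i) ∈ K) ∧ ∃ β : ι → ℝ, (∀ i, 0 < β i) ∧ v = ∑ i, β i • intVec (A i)

section Lattice

variable {ι : Type*} [DecidableEq ι]

-- Rows `s ⊙ (F + N eᵢ)`: with `s = sign v` and `F ≈ R |v|` these are integer points near `R • v`.
def baseMatrix (s : ι → ℤ) (F : ι → ℕ) (N : ℕ) : Matrix ι ι ℤ :=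
  Matrix.of fun i m => s m * (F m + if m = i then (N : ℤ) else 0)

lemma tendsto_inv_smul_baseMatrix {v : EuclideanSpace ℝ ι} {s : ι → ℤ}
    (hs : ∀ m, (s m : ℝ) * |v m| = v m) (N : ℕ) (i : ι) :
    Tendsto (fun R : ℝ => R⁻¹ • intVec (baseMatrix s (fun m => ⌊|v m| * R⌋₊) N i)) atTop (𝓝 v) := by
  have hcoord : Tendsto (fun R : ℝ => fun m => (s m : ℝ) *
      (⌊|v m| * R⌋₊ / R + (if m = i then (N : ℝ) else 0) / R)) atTop (𝓝 fun m => v m) :=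
    tendsto_pi_nhds.2 fun m => by
      simpa [hs m] using ((tendsto_nat_floor_mul_div_atTop (abs_nonneg (v m))).add
        (tendsto_const_nhds.div_atTop tendsto_id)).const_mul (s m : ℝ)
  convert (PiLp.continuous_toLp 2 _).continuousAt.tendsto.comp hcoord using 1
  ext R m
  simp [intVec, baseMatrix]
  ring

variable [Fintype ι]

lemma det_baseMatrix_ne_zero {s : ι → ℤ} (hs : ∀ m, s m ≠ 0) (F : ι → ℕ) {N : ℕ} (hN : 0 < N) :
    (baseMatrix s F N).det ≠ 0 := by
  intro h0
  obtain ⟨t, ht0, ht⟩ := exists_vecMul_eq_zero_iff.mpr h0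
  set T := ∑ i, t i
  have hm : ∀ m, T * F m + N * t m = 0 := by
    intro m
    have hentry : ∀ i, t i * baseMatrix s F N i m
        = s m * F m * t i + if m = i then s m * N * t i else 0 := by
      intro i
      split_ifs with h <;> simp [baseMatrix, h] <;> ring
    have hsm : s m * (T * F m + N * t m) = 0 := by
      have := congrFun ht m
      rw [Pi.zero_apply, vecMul, dotProduct, Finset.sum_congr rfl fun i _ => hentry i,
        Finset.sum_add_distrib, ← Finset.mul_sum, Finset.sum_ite_eq] at this
      rw [← this]
      simp only [Finset.mem_univ, if_true, T]
      ring
    exact (mul_eq_zero.mp hsm).resolve_left (hs m)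
  have hT : T * (N + ∑ m, (F m : ℤ)) = 0 := by
    have := Finset.sum_eq_zero (s := Finset.univ) fun m _ => hm m
    rw [Finset.sum_add_distrib, ← Finset.mul_sum, ← Finset.mul_sum] at this
    linarith
  have hT0 : T = 0 := (mul_eq_zero.mp hT).resolve_right (by positivity)
  exact ht0 (funext fun m => by simpa [hT0, hN.ne'] using hm m)

lemma exists_pos_coeffs_baseMatrix {v : EuclideanSpace ℝ ι} (hv0 : ∀ m, v m ≠ 0) {s : ι → ℤ}
    (hs : ∀ m, (s m : ℝ) * |v m| = v m) {R : ℝ} {F : ι → ℕ} (hF : ∀ m, F m ≤ R * |v m|)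
    (hF' : ∀ m, R * |v m| < F m + 1) :
    ∃ β : ι → ℝ, (∀ i, 0 < β i) ∧
      v = ∑ i, β i • intVec (baseMatrix s F (Fintype.card ι + 1) i) := by
  set N : ℝ := Fintype.card ι + 1
  set V := ∑ m, |v m|
  set Q := ∑ m, (F m : ℝ)
  have hN : 0 < N := by positivity
  have hQ : 0 ≤ Q := by positivity
  set σ := V / (N + Q)
  have hσ : 0 ≤ σ := by positivity
  -- `N > card ι` absorbs the rounding errors of the floors, which makes every `β i` positive.
  have hσR : σ * R < 1 := by
    have : R * V ≤ Q + Fintype.card ι := by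
      simpa [V, Finset.mul_sum, Finset.sum_add_distrib, Q] using
        Finset.sum_le_sum fun m (_ : m ∈ Finset.univ) => (hF' m).le
    rw [div_mul_eq_mul_div, div_lt_one (by positivity)]
    linarith
  set β : ι → ℝ := fun i => (|v i| - σ * F i) / N
  have hβsum : ∑ i, β i = σ := by
    have : σ * (N + Q) = V := div_mul_cancel₀ _ (by positivity)
    rw [← Finset.sum_div, Finset.sum_sub_distrib, ← Finset.mul_sum, div_eq_iff hN.ne']
    linarith
  refine ⟨β, fun i => div_pos (sub_pos.2 ?_) hN, ?_⟩
  · calc σ * F i ≤ σ * (R * |v i|) := mul_le_mul_of_nonneg_left (hF i) hσ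
      _ < |v i| := by nlinarith [abs_pos.mpr (hv0 i)]
  ext m
  have hentry : ∀ i, β i * (baseMatrix s F (Fintype.card ι + 1) i m : ℝ)
      = s m * F m * β i + if m = i then s m * N * β i else 0 := by
    intro i
    split_ifs with h <;> simp [baseMatrix, h, N] <;> ring
  have hβm : N * β m = |v m| - σ * F m := mul_div_cancel₀ _ hN.ne'
  rw [sum_smul_intVec_apply, Finset.sum_congr rfl fun i _ => hentry i, Finset.sum_add_distrib,
    ← Finset.mul_sum, Finset.sum_ite_eq, if_pos (Finset.mem_univ _), hβsum]
  linear_combination -(s m : ℝ) * hβm - hs m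

lemma exists_admissible {v : EuclideanSpace ℝ ι} (hv0 : ∀ m, v m ≠ 0)
    {K : ConvexCone ℝ (EuclideanSpace ℝ ι)} (hK : IsOpen (K : Set (EuclideanSpace ℝ ι)))
    (hvK : v ∈ K) : ∃ A : Matrix ι ι ℤ, A.det ≠ 0 ∧ IsAdmissible K v A := by
  set s : ι → ℤ := fun m => SignType.sign (v m)
  have hs : ∀ m, (s m : ℝ) * |v m| = v m := fun m => by simp [s, sign_mul_abs]
  set A := fun R : ℝ => baseMatrix s (fun m => ⌊|v m| * R⌋₊) (Fintype.card ι + 1)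
  obtain ⟨R, hR, hRK⟩ : ∃ R : ℝ, 0 < R ∧ ∀ i, R⁻¹ • intVec (A R i) ∈ K :=
    ((eventually_gt_atTop 0).and (eventually_all.2 fun i =>
      (tendsto_inv_smul_baseMatrix hs _ i).eventually (hK.mem_nhds hvK))).exists
  refine ⟨A R, det_baseMatrix_ne_zero (fun m hm => hv0 m ?_) _ (Nat.succ_pos _),
    fun i => (K.smul_mem_iff (inv_pos.2 hR)).1 (hRK i),
    exists_pos_coeffs_baseMatrix (R := R) hv0 hs (fun m => ?_) (fun m => ?_)⟩
  · simpa [hm] using (hs m).symm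
  · rw [mul_comm R]
    exact Nat.floor_le (by positivity)
  · rw [mul_comm R]
    exact Nat.lt_floor_add_one _

lemma isUnit_det_map_intCast {A : Matrix ι ι ℤ} (hA : A.det ≠ 0) :
    IsUnit (A.map ((↑) : ℤ → ℚ)).det := by
  rw [isUnit_iff_ne_zero, ← Int.cast_det]
  exact_mod_cast hA

lemma linearIndependent_coeffs {v : EuclideanSpace ℝ ι} (hv : LinearIndependent ℚ fun m => v m)
    {A : Matrix ι ι ℤ} (hA : A.det ≠ 0) {β : ι → ℝ} (hvβ : v = ∑ i, β i • intVec (A i)) :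
    LinearIndependent ℚ β := by
  rw [Fintype.linearIndependent_iff] at hv ⊢
  intro c hc
  set B : Matrix ι ι ℚ := A.map (↑)
  set d := B⁻¹ *ᵥ c
  have hBd : B *ᵥ d = c := by
    rw [mulVec_mulVec, B.mul_nonsing_inv (isUnit_det_map_intCast hA), one_mulVec]
  have hcoord : ∀ m, v m = ∑ i, β i * A i m := fun m => by rw [hvβ, sum_smul_intVec_apply]
  have hd : ∀ m, d m = 0 := hv d <| by
    calc ∑ m, d m • v m = ∑ i, ((B *ᵥ d) i : ℝ) * β i := by
          simp only [hcoord, Rat.smul_def, Finset.mul_sum, mulVec, dotProduct, B, map_apply]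
          rw [Finset.sum_comm]
          push_cast
          refine Finset.sum_congr rfl fun i _ => ?_
          rw [Finset.sum_mul]
          exact Finset.sum_congr rfl fun m _ => by ring
      _ = 0 := by simpa [hBd, Rat.smul_def, mul_comm] using hc
  have : d = 0 := funext hd
  simpa [this] using congrFun hBd.symm

lemma exists_fract_vecMul {A : Matrix ι ι ℤ} (hA : A.det ≠ 0) (hAu : ¬IsUnit A.det) :
    ∃ (γ : ι → ℚ) (x : ι → ℤ), γ ≠ 0 ∧ (∀ i, 0 ≤ γ i ∧ γ i < 1) ∧
      (fun m => (x m : ℚ)) = γ ᵥ* A.map (↑) := by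
  obtain ⟨y, hy⟩ : ∃ y, y ∉ Set.range (· ᵥ* A) := by
    by_contra! h
    exact hAu ((isUnit_iff_isUnit_det A).mp (vecMul_surjective_iff_isUnit.mp h))
  set B := A.map ((↑) : ℤ → ℚ)
  set c := (fun m => (y m : ℚ)) ᵥ* B⁻¹
  have hc : c ᵥ* B = fun m => (y m : ℚ) := by
    rw [vecMul_vecMul, B.nonsing_inv_mul (isUnit_det_map_intCast hA), vecMul_one]
  have hkey : (fun m => ((y - (fun i => ⌊c i⌋) ᵥ* A) m : ℚ)) = (fun i => Int.fract (c i)) ᵥ* B := by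
    ext m
    have hmap : (((fun i => ⌊c i⌋) ᵥ* A) m : ℚ) = ((fun i => (⌊c i⌋ : ℚ)) ᵥ* B) m :=
      (Int.castRingHom ℚ).map_vecMul A _ m
    change _ = ((c - fun i => (⌊c i⌋ : ℚ)) ᵥ* B) m
    rw [sub_vecMul, hc]
    simp only [Pi.sub_apply, ← hmap, Int.cast_sub]
  refine ⟨fun i => Int.fract (c i), _, fun h0 => hy ⟨fun i => ⌊c i⌋, ?_⟩,
    fun i => ⟨Int.fract_nonneg _, Int.fract_lt_one _⟩, hkey⟩
  rw [h0, zero_vecMul] at hkey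
  ext m
  have := congrFun hkey m
  simp only [Pi.zero_apply, Int.cast_eq_zero, Pi.sub_apply, sub_eq_zero] at this
  exact this.symm

lemma det_updateRow_of_vecMul {A : Matrix ι ι ℤ} {γ : ι → ℚ} {x : ι → ℤ}
    (hx : (fun m => (x m : ℚ)) = γ ᵥ* A.map (↑)) (j : ι) :
    ((A.updateRow j x).det : ℚ) = γ j * A.det := by
  rw [Int.cast_det, Int.cast_det, map_updateRow]
  have : (Int.cast ∘ x : ι → ℚ) = ∑ k, γ k • A.map (↑) k := by rw [← vecMul_eq_sum]; exact hx
  rw [this, det_updateRow_sum, smul_eq_mul]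

lemma isAdmissible_updateRow {K : ConvexCone ℝ (EuclideanSpace ℝ ι)} {v : EuclideanSpace ℝ ι}
    {A : Matrix ι ι ℤ} (hK : ∀ i, intVec (A i) ∈ K) {β : ι → ℝ} (hβ : ∀ i, 0 < β i)
    (hvβ : v = ∑ i, β i • intVec (A i)) {γ : ι → ℝ} (hγ : ∀ i, 0 ≤ γ i) {x : ι → ℤ}
    (hx : intVec x = ∑ i, γ i • intVec (A i)) {j : ι} (hγj : 0 < γ j)
    (hj : ∀ i ≠ j, γ i * β j < γ j * β i) :
    IsAdmissible K v (A.updateRow j x) := by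
  have hrows : ∀ i, intVec (A.updateRow j x i) =
      Function.update (fun i => intVec (A i)) j (intVec x) i := by
    intro i
    rcases eq_or_ne i j with rfl | h <;> simp [*]
  refine ⟨fun i => ?_, Function.update (β - (β j / γ j) • γ) j (β j / γ j), fun i => ?_, ?_⟩
  · rw [hrows]
    rcases eq_or_ne i j with rfl | h
    · rw [Function.update_self, hx]
      exact K.sum_smul_mem (fun i _ => hγ i)
        (Finset.sum_pos' (fun i _ => hγ i) ⟨i, Finset.mem_univ _, hγj⟩) (fun i _ => hK i)
    · rw [Function.update_of_ne h]
      exact hK i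
  · rcases eq_or_ne i j with rfl | h
    · simpa using div_pos (hβ i) hγj
    · simp only [Function.update_of_ne h, Pi.sub_apply, Pi.smul_apply, smul_eq_mul, sub_pos]
      rw [div_mul_eq_mul_div, div_lt_iff₀ hγj]
      linarith [hj i h]
  · simp_rw [hrows, hx]
    rw [sum_smul_update_eq β γ _ hγj.ne']
    exact hvβ

lemma IsAdmissible.exists_natAbs_det_lt {K : ConvexCone ℝ (EuclideanSpace ℝ ι)}
    {v : EuclideanSpace ℝ ι} (hv : LinearIndependent ℚ fun m => v m) {A : Matrix ι ι ℤ}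
    (hA : IsAdmissible K v A) (hdet : A.det ≠ 0) (hunit : ¬IsUnit A.det) :
    ∃ A' : Matrix ι ι ℤ, IsAdmissible K v A' ∧ A'.det ≠ 0 ∧ A'.det.natAbs < A.det.natAbs := by
  obtain ⟨hK, β, hβ, hvβ⟩ := hA
  obtain ⟨γ, x, hγ, hγ01, hx⟩ := exists_fract_vecMul hdet hunit
  obtain ⟨j, hγj, hj⟩ := exists_index_lt_of_linearIndependent hβ
    (linearIndependent_coeffs hv hdet hvβ) (fun i => (hγ01 i).1) hγ
  have hxR : intVec x = ∑ i, (γ i : ℝ) • intVec (A i) := by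
    ext m
    have := congrFun hx m
    simp only [vecMul, dotProduct, map_apply] at this
    rw [sum_smul_intVec_apply]
    simp only [intVec]
    exact_mod_cast this
  have hdet' := det_updateRow_of_vecMul hx j
  refine ⟨A.updateRow j x, isAdmissible_updateRow hK hβ hvβ (fun i => by exact_mod_cast (hγ01 i).1)
    hxR (by exact_mod_cast hγj) (fun i hi => by exact_mod_cast hj i hi), ?_, ?_⟩
  · exact_mod_cast hdet'.trans_ne (mul_ne_zero hγj.ne' (by exact_mod_cast hdet))
  · have habs : |((A.updateRow j x).det : ℚ)| < |(A.det : ℚ)| := by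
      rw [hdet', abs_mul, abs_of_pos hγj]
      exact mul_lt_of_lt_one_left (abs_pos.mpr (by exact_mod_cast hdet)) (hγ01 j).2
    zify
    exact_mod_cast habs

lemma IsAdmissible.exists_isUnit_det {K : ConvexCone ℝ (EuclideanSpace ℝ ι)}
    {v : EuclideanSpace ℝ ι} (hv : LinearIndependent ℚ fun m => v m) {A : Matrix ι ι ℤ}
    (hA : IsAdmissible K v A) (hdet : A.det ≠ 0) : ∃ U, IsAdmissible K v U ∧ IsUnit U.det := by
  induction hn : A.det.natAbs using Nat.strong_induction_on generalizing A with
  | _ n ih =>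
    by_cases hunit : IsUnit A.det
    · exact ⟨A, hA, hunit⟩
    obtain ⟨A', hA', hdet', hlt⟩ := hA.exists_natAbs_det_lt hv hdet hunit
    exact ih _ (hn ▸ hlt) hA' hdet' rfl

lemma exists_basis_of_isUnit_det {U : Matrix ι ι ℤ} (hU : IsUnit U.det) :
    ∃ b : Module.Basis ι ℤ (ι → ℤ), ∀ i, b i = U i := by
  obtain ⟨hli, hspan⟩ := (Pi.basisFun ℤ ι).is_basis_iff_det.2 (by rwa [Pi.basisFun_det])
  exact ⟨Module.Basis.mk hli hspan.ge, Module.Basis.mk_apply hli hspan.ge⟩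

end Lattice

end MaximallyIrrational

open MaximallyIrrational in
/-- A maximally irrational vector `v ∈ ℝ^k` with positive first coordinate
can be approximated, in angular distance, by the members of a ℤ-basis `u` of `ℤ^k`
in whose positive cone `v` lies, with all `u i` having positive first coordinate. -/
theorem stmt1 (k : ℕ) (hk : 0 < k) (v : EuclideanSpace ℝ (Fin k))
    (hv : LinearIndependent ℚ (fun i : Fin k => v i))
    (hv1 : 0 < v ⟨0, hk⟩) (ε : ℝ) (hε : 0 < ε) :
    ∃ u : Fin k → Fin k → ℤ,
      -- (1) u is a ℤ-basis of ℤ^k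
      (∃ b : Module.Basis (Fin k) ℤ (Fin k → ℤ), ∀ i, b i = u i) ∧
      -- (2) v is a strictly positive combination of the u i
      (∃ α : Fin k → ℝ, (∀ i, 0 < α i) ∧
        v = ∑ i, α i • (WithLp.toLp 2 (fun j => ((u i j : ℝ))) : EuclideanSpace ℝ (Fin k))) ∧
      -- (3) each ray l(u i) is within angular distance ε of l(v)
      (∀ i, InnerProductGeometry.angle v
        (WithLp.toLp 2 (fun j => ((u i j : ℝ))) : EuclideanSpace ℝ (Fin k)) < ε) ∧
      -- (4) the first coordinate of each u i is positive
      (∀ i, 0 < u i ⟨0, hk⟩) := by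
  set i₀ : Fin k := ⟨0, hk⟩
  have hv0 : ∀ m, v m ≠ 0 := hv.ne_zero
  set θ := min ε π
  have hθ : 0 < θ := lt_min hε pi_pos
  set w := EuclideanSpace.single i₀ (v i₀)
  set c : ℝ≥0 := ⟨max ‖v - w‖ (‖v‖ * cos θ), (norm_nonneg _).trans (le_max_left _ _)⟩
  have hcv : (c : ℝ) < ‖v‖ := by
    refine max_lt (norm_sub_single_lt (hv0 i₀)) (mul_lt_of_lt_one_right ?_ ?_)
    · exact (norm_nonneg _).trans_lt (norm_sub_single_lt (hv0 i₀))
    · simpa using cos_lt_cos_of_nonneg_of_le_pi le_rfl (min_le_right _ _) hθ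
  obtain ⟨A, hA, hadm⟩ := exists_admissible hv0 (isOpen_narrowCone v c) (mem_narrowCone_self hcv)
  obtain ⟨U, ⟨hUK, α, hα, hvα⟩, hU⟩ := hadm.exists_isUnit_det hv hA
  refine ⟨U, exists_basis_of_isUnit_det hU, ⟨α, hα, hvα⟩, fun i => ?_, fun i => ?_⟩
  · exact (angle_lt_of_mem_narrowCone hθ.le (min_le_right _ _) (le_max_right _ _) (hUK i)).trans_le
      (min_le_left _ _)
  · have := inner_pos_of_mem_narrowCone (le_max_left _ _) (hUK i)
    rw [EuclideanSpace.inner_single_left] at this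
    simpa [intVec] using (pos_iff_pos_of_mul_pos this).1 hv1
end

section
/- Let v ∈ R^k have Q-linearly independent coordinates, and let (a_1, ..., a_k) be a family of vectors in Z^k such that v = β_1 a_1 + ... + β_k a_k with all β_i > 0. Then (a_1, ..., a_k) is linearly independent over R, hence a basis of R^k. -/
/-!
Let `A` be the integer matrix with rows `a i`, so that `v = β ᵥ* A`. If `A *ᵥ q = 0` for an
integer vector `q`, then pairing `v` with `q` gives
`∑ j, q j * v j = β ⬝ᵥ (A *ᵥ q) = 0`, an integer relation among the coordinates of `v`.
So ℚ-independence of the coordinates forces `q = 0`, i.e. `det A ≠ 0`, and the integer rows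
of `A` stay independent over `ℝ`.
-/

open Matrix

namespace Matrix

variable {R L m n : Type*} [Fintype m] [Fintype n] [CommRing R] [CommRing L] [Algebra R L]

theorem eq_zero_of_mulVec_eq_zero_of_linearIndependent {A : Matrix m n R} {β : m → L}
    (hv : LinearIndependent R (β ᵥ* A.map (algebraMap R L))) {q : n → R} (hq : A *ᵥ q = 0) :
    q = 0 := by
  refine funext (Fintype.linearIndependent_iff.mp hv q ?_)
  calc ∑ j, q j • (β ᵥ* A.map (algebraMap R L)) j
      = (β ᵥ* A.map (algebraMap R L)) ⬝ᵥ (algebraMap R L ∘ q) := by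
        simp only [dotProduct, Algebra.smul_def, Function.comp_apply, mul_comm]
    _ = β ⬝ᵥ (algebraMap R L ∘ (A *ᵥ q)) := by
        rw [← dotProduct_mulVec]
        congr 1
        funext i
        exact (RingHom.map_mulVec _ A q i).symm
    _ = 0 := by simp [hq]

theorem det_ne_zero_of_linearIndependent_vecMul_map [IsDomain R] [DecidableEq n]
    {A : Matrix n n R} {β : n → L} (hv : LinearIndependent R (β ᵥ* A.map (algebraMap R L))) :
    A.det ≠ 0 := by
  rintro hA
  obtain ⟨q, hq, hAq⟩ := exists_mulVec_eq_zero_iff.mpr hA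
  exact hq (eq_zero_of_mulVec_eq_zero_of_linearIndependent hv hAq)

end Matrix

theorem stmt2_general (k : ℕ) (v : Fin k → ℝ) (hv : LinearIndependent ℚ v)
    (a : Fin k → Fin k → ℤ) (β : Fin k → ℝ)
    (hsum : v = ∑ i, β i • (fun j => (a i j : ℝ))) :
    LinearIndependent ℝ (fun i : Fin k => (fun j => (a i j : ℝ))) ∧
    Submodule.span ℝ (Set.range (fun i : Fin k => (fun j => (a i j : ℝ)))) = ⊤ := by
  set A : Matrix (Fin k) (Fin k) ℤ := Matrix.of a
  have hv_vecMul : v = β ᵥ* A.map (algebraMap ℤ ℝ) := by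
    funext j
    simp [hsum, A, vecMul, dotProduct, Finset.sum_apply]
  have hdet : A.det ≠ 0 :=
    det_ne_zero_of_linearIndependent_vecMul_map (hv_vecMul ▸ hv.restrict_scalars' ℤ)
  have hli : LinearIndependent ℝ (fun i => A.map (algebraMap ℤ ℝ) i) := by
    refine linearIndependent_rows_of_det_ne_zero ?_
    rw [← RingHom.mapMatrix_apply, ← RingHom.map_det]
    simpa using hdet
  exact ⟨hli, hli.span_eq_top_of_card_eq_finrank' (by simp)⟩

/-- If `v ∈ ℝ^k` has ℚ-linearly independent coordinates and is a strictly
positive combination of integer vectors `a 1, ..., a k`, then the `a i` are linearly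
independent over ℝ, hence form a basis of `ℝ^k`. -/
theorem stmt2 (k : ℕ) (v : Fin k → ℝ) (hv : LinearIndependent ℚ v)
    (a : Fin k → Fin k → ℤ) (β : Fin k → ℝ) (hβ : ∀ i, 0 < β i)
    (hsum : v = ∑ i, β i • (fun j => (a i j : ℝ))) :
    LinearIndependent ℝ (fun i : Fin k => (fun j => (a i j : ℝ))) ∧
    Submodule.span ℝ (Set.range (fun i : Fin k => (fun j => (a i j : ℝ)))) = ⊤ :=
  stmt2_general k v hv a β hsum
end

section
/- Let (a_1, ..., a_k) be a basis of R^k and q = β_1 a_1 + ... + β_r a_r with all β_i > 0 for i ≤ r. Then the cone generated by (a_1, ..., a_k) equals the union over j = 1, ..., r of the cones generated by the families F_j obtained by replacing a_j with q. -/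
/-!
If `q = ∑ βᵢ aᵢ` with `β ≥ 0`, substituting `q` for `a_j` expresses every combination of the new
family as a nonnegative combination of the old one. Conversely, given `x = ∑ cᵢ aᵢ` with `c ≥ 0`,
choose `j` minimising the ratio `c_j / β_j` over the indices with `β_j > 0` and put `t = c_j / β_j`:
then `x = t q + ∑_{i ≠ j} (cᵢ - t βᵢ) aᵢ`, and minimality makes every coefficient nonnegative.
-/

open Function

theorem sum_smul_update_sum_smul {ι R M : Type*} [Fintype ι] [DecidableEq ι] [Semiring R]
    [AddCommMonoid M] [Module R M] (a : ι → M) (β e : ι → R) (j : ι) :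
    ∑ i, e i • update a j (∑ i, β i • a i) i = ∑ i, (update e j 0 i + e j * β i) • a i := by
  have hsplit : ∀ i, e i • update a j (∑ i, β i • a i) i =
      update e j 0 i • a i + if i = j then e j • ∑ i, β i • a i else 0 := by
    intro i
    by_cases h : i = j
    · subst h; simp
    · simp [h]
  simp only [hsplit, Finset.sum_add_distrib, Finset.sum_ite_eq', Finset.mem_univ, if_true,
    Finset.smul_sum, add_smul, mul_smul]

section NonnegCombinations

variable (𝕜 : Type*) {ι M : Type*} [Field 𝕜] [LinearOrder 𝕜] [IsStrictOrderedRing 𝕜]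
  [AddCommMonoid M] [Module 𝕜 M] [Fintype ι]

def nonnegCombinations (a : ι → M) : Set M :=
  {x | ∃ c : ι → 𝕜, (∀ i, 0 ≤ c i) ∧ x = ∑ i, c i • a i}

variable {𝕜} [DecidableEq ι]

theorem nonnegCombinations_update_subset {a : ι → M} {β : ι → 𝕜} (hβ : ∀ i, 0 ≤ β i) (j : ι) :
    nonnegCombinations 𝕜 (update a j (∑ i, β i • a i)) ⊆ nonnegCombinations 𝕜 a := by
  rintro x ⟨e, he, rfl⟩
  refine ⟨fun i => update e j 0 i + e j * β i, fun i => ?_, sum_smul_update_sum_smul a β e j⟩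
  refine add_nonneg ?_ (mul_nonneg (he j) (hβ i))
  by_cases h : i = j
  · simp [h]
  · simpa [h] using he i

theorem nonnegCombinations_subset_iUnion_update {a : ι → M} {β : ι → 𝕜} (hβ : ∀ i, 0 ≤ β i)
    {j₀ : ι} (hj₀ : 0 < β j₀) :
    nonnegCombinations 𝕜 a ⊆
      ⋃ (j : ι) (_ : 0 < β j), nonnegCombinations 𝕜 (update a j (∑ i, β i • a i)) := by
  rintro x ⟨c, hc, rfl⟩
  obtain ⟨j, hj, hmin⟩ := Finset.exists_min_image (Finset.univ.filter (0 < β ·))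
    (fun i => c i / β i) ⟨j₀, by simpa using hj₀⟩
  simp only [Finset.mem_filter, Finset.mem_univ, true_and] at hj hmin
  set t := c j / β j
  have hcj : c j = t * β j := (div_mul_cancel₀ _ hj.ne').symm
  simp only [Set.mem_iUnion]
  refine ⟨j, hj, update (fun i => c i - t * β i) j t, fun i => ?_, ?_⟩
  · by_cases hij : i = j
    · subst hij; simpa using div_nonneg (hc i) hj.le
    rw [update_of_ne hij, sub_nonneg]
    rcases (hβ i).lt_or_eq with hβi | hβi
    · exact (le_div_iff₀ hβi).mp (hmin i hβi)
    · simpa [← hβi] using hc i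
  · rw [sum_smul_update_sum_smul]
    refine Finset.sum_congr rfl fun i _ => congrArg (· • a i) ?_
    by_cases hij : i = j
    · subst hij; simp [hcj]
    · simp [hij]

theorem nonnegCombinations_eq_iUnion_update {a : ι → M} {β : ι → 𝕜} (hβ : ∀ i, 0 ≤ β i)
    {j₀ : ι} (hj₀ : 0 < β j₀) :
    nonnegCombinations 𝕜 a =
      ⋃ (j : ι) (_ : 0 < β j), nonnegCombinations 𝕜 (update a j (∑ i, β i • a i)) :=
  (nonnegCombinations_subset_iUnion_update hβ hj₀).antisymm <|
    Set.iUnion₂_subset fun j _ => nonnegCombinations_update_subset hβ j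

end NonnegCombinations

theorem stmt4_general (k r : ℕ) (hr : 1 ≤ r) (hrk : r ≤ k)
    (a : Fin k → Fin k → ℝ)
    (β : Fin k → ℝ) (hβ : ∀ i : Fin k, (i : ℕ) < r → 0 < β i)
    (q : Fin k → ℝ)
    (hq : q = ∑ i ∈ Finset.univ.filter (fun i : Fin k => (i : ℕ) < r), β i • a i) :
    {x : Fin k → ℝ | ∃ c : Fin k → ℝ, (∀ i, 0 ≤ c i) ∧ x = ∑ i, c i • a i} =
      ⋃ (j : Fin k) (_ : (j : ℕ) < r),
        {x : Fin k → ℝ | ∃ c : Fin k → ℝ, (∀ i, 0 ≤ c i) ∧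
          x = ∑ i, c i • Function.update a j q i} := by
  set β' : Fin k → ℝ := fun i => if (i : ℕ) < r then β i else 0
  have hβ'_pos : ∀ i, 0 < β' i ↔ (i : ℕ) < r := fun i => by
    by_cases hi : (i : ℕ) < r <;> simp [β', hi, hβ]
  have hq' : q = ∑ i, β' i • a i := by
    simp only [hq, β', ite_smul, zero_smul, Finset.sum_filter]
  have hβ'_nonneg : ∀ i, 0 ≤ β' i := fun i => by
    by_cases hi : (i : ℕ) < r
    · exact ((hβ'_pos i).mpr hi).le
    · simp [β', hi]
  have h := nonnegCombinations_eq_iUnion_update hβ'_nonneg (a := a)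
    ((hβ'_pos ⟨0, Nat.lt_of_lt_of_le hr hrk⟩).mpr hr)
  simp only [hβ'_pos] at h
  rw [hq']
  exact h

/-- If `(a 1, ..., a k)` is a basis of `ℝ^k` and
`q = β_1 a_1 + ... + β_r a_r` with all `β_i > 0` (`i < r`), then the cone generated by
`a` is the union over `j < r` of the cones generated by the families obtained from `a`
by replacing `a j` with `q`. -/
theorem stmt4 (k r : ℕ) (hr : 1 ≤ r) (hrk : r ≤ k)
    (a : Fin k → Fin k → ℝ) (ha : LinearIndependent ℝ a)
    (hspan : Submodule.span ℝ (Set.range a) = ⊤)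
    (β : Fin k → ℝ) (hβ : ∀ i : Fin k, (i : ℕ) < r → 0 < β i)
    (q : Fin k → ℝ)
    (hq : q = ∑ i ∈ Finset.univ.filter (fun i : Fin k => (i : ℕ) < r), β i • a i) :
    {x : Fin k → ℝ | ∃ c : Fin k → ℝ, (∀ i, 0 ≤ c i) ∧ x = ∑ i, c i • a i} =
      ⋃ (j : Fin k) (_ : (j : ℕ) < r),
        {x : Fin k → ℝ | ∃ c : Fin k → ℝ, (∀ i, 0 ≤ c i) ∧
          x = ∑ i, c i • Function.update a j q i} :=
  stmt4_general k r hr hrk a β hβ q hq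
end

section
/- Let G be a group, Γ = {ξ_1, ..., ξ_k} a finite set of homomorphisms G → R all factoring through an epimorphism ζ: G → Z^n via linear forms ξ̄_i, and let C_Γ = {x ∈ R^n : ξ̄_i(x) ≤ 0 for all i}. If C_Γ is a solid cone (has nonempty interior), then Λ̂_Γ = ∪_{g ∈ G} g · Λ̂_Γ^-, where Λ̂_Γ = ∩_i Λ̂_{ξ_i} and Λ̂_Γ^- = ∩_i Λ̂_{ξ_i}^-. -/
/-!
On the support of a series in `Λ̂_Γ` every `ξ_i` is bounded above. Since `C_Γ` is solid, an
interior point `x₀` satisfies `ξ̄_i(x₀) < 0` for each nonzero `ξ̄_i`, with a margin that survives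
rounding; so lattice points near `-t x₀`, `t ≫ 0`, have every nonzero `ξ̄_i` above these bounds.
Translating the series by a preimage `g` of such a point under `ζ` moves its support into
`ξ_i ≤ 0`, and the Novikov conditions are invariant under translation.
-/

/-- The Novikov condition for formal series over `G`. -/
def NovCond7 {G : Type*} (ξ : G → ℝ) (lam : G → ℤ) : Prop :=
  ∀ C : ℝ, {g : G | lam g ≠ 0 ∧ C ≤ ξ g}.Finite

theorem NovCond7.comp_mul_left {G : Type*} [Group G] {Ξ : G → ℝ}
    (hΞ : ∀ g h : G, Ξ (g * h) = Ξ g + Ξ h) {lam : G → ℤ} (hlam : NovCond7 Ξ lam) (a : G) :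
    NovCond7 Ξ (fun u => lam (a * u)) := by
  intro C
  refine ((hlam (C + Ξ a)).preimage (mul_right_injective a).injOn).subset ?_
  rintro u ⟨hu, hCu⟩
  exact ⟨hu, by rw [hΞ]; linarith⟩

theorem NovCond7.exists_forall_le {G : Type*} {Ξ : G → ℝ} {lam : G → ℤ}
    (hlam : NovCond7 Ξ lam) : ∃ M, ∀ u, lam u ≠ 0 → Ξ u ≤ M := by
  obtain ⟨M, hM⟩ := ((hlam 0).image Ξ).bddAbove
  refine ⟨max M 0, fun u hu => ?_⟩
  rcases le_total 0 (Ξ u) with h | h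
  · exact le_max_of_le_left (hM ⟨u, ⟨hu, h⟩, rfl⟩)
  · exact le_max_of_le_right h

namespace LinearMap

variable {E : Type*} [SeminormedAddCommGroup E] [NormedSpace ℝ E] {f : E →ₗ[ℝ] ℝ}

theorem mul_abs_apply_le_of_ball_subset {x₀ : E} {ε : ℝ} (hε : 0 < ε)
    (hball : Metric.ball x₀ ε ⊆ {x | f x ≤ 0}) {w : E} (hw : ‖w‖ < 1) :
    ε * |f w| ≤ -f x₀ := by
  have hsmall : ‖ε • w‖ < ε := by
    rw [norm_smul, Real.norm_of_nonneg hε.le]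
    exact mul_lt_of_lt_one_right hε hw
  have hplus : f (x₀ + ε • w) ≤ 0 := hball (by simpa [dist_eq_norm] using hsmall)
  have hminus : f (x₀ - ε • w) ≤ 0 := hball (by simpa [dist_eq_norm] using hsmall)
  simp only [map_add, map_sub, map_smul, smul_eq_mul] at hplus hminus
  have h := abs_le.2 (⟨by linarith, by linarith⟩ : -(-f x₀) ≤ ε * f w ∧ ε * f w ≤ -f x₀)
  rwa [abs_mul, abs_of_pos hε] at h

theorem apply_neg_of_mem_interior {x₀ : E} (hx₀ : x₀ ∈ interior {x | f x ≤ 0}) (hf : f ≠ 0) :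
    f x₀ < 0 := by
  obtain ⟨ε, hε, hball⟩ := Metric.isOpen_iff.1 isOpen_interior x₀ hx₀
  have hmargin := fun w (hw : ‖w‖ < 1) =>
    mul_abs_apply_le_of_ball_subset hε (hball.trans interior_subset) hw
  have hx₀C : x₀ ∈ {x | f x ≤ 0} := interior_subset hx₀
  refine (show f x₀ ≤ 0 from hx₀C).lt_of_ne fun h0 => hf ?_
  have hker : Metric.ball 0 1 ⊆ (ker f : Set E) := fun w hw => by
    have := hmargin w (by simpa using hw)
    rw [h0, neg_zero] at this
    exact abs_eq_zero.1 (le_antisymm (nonpos_of_mul_nonpos_right this hε) (abs_nonneg _))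
  have := (ker f).eq_top_of_nonempty_interior'
    ⟨0, interior_maximal hker Metric.isOpen_ball (Metric.mem_ball_self one_pos)⟩
  exact ker_eq_top.1 this

end LinearMap

theorem exists_int_norm_sub_lt_one {n : ℕ} (y : Fin n → ℝ) :
    ∃ z : Fin n → ℤ, ‖(fun j => (z j : ℝ)) - y‖ < 1 := by
  refine ⟨fun j => round (y j), (pi_norm_lt_iff one_pos).2 fun j => ?_⟩
  rw [Pi.sub_apply, Real.norm_eq_abs, abs_sub_comm]
  exact (abs_sub_round (y j)).trans_lt (by norm_num)

theorem exists_int_le_apply_of_nonempty_interior {ι : Type*} [Finite ι] {n : ℕ}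
    (f : ι → (Fin n → ℝ) →ₗ[ℝ] ℝ) (hsolid : (interior {x | ∀ i, f i x ≤ 0}).Nonempty)
    (M : ι → ℝ) : ∃ z : Fin n → ℤ, ∀ i, f i ≠ 0 → M i ≤ f i (fun j => (z j : ℝ)) := by
  obtain ⟨x₀, hx₀⟩ := hsolid
  obtain ⟨ε, hε, hball⟩ := Metric.isOpen_iff.1 isOpen_interior x₀ hx₀
  obtain ⟨t, ht⟩ := Finite.exists_le fun i => M i / (-f i x₀) + ε⁻¹
  -- `z` is a lattice point within distance `1` of `t • -x₀`; the margin `ε` of `x₀` inside the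
  -- cone bounds the rounding error `f i (z - t • -x₀)` by `ε⁻¹ * -f i x₀`.
  obtain ⟨z, hz⟩ := exists_int_norm_sub_lt_one (t • -x₀)
  refine ⟨z, fun i hfi => ?_⟩
  have hneg : f i x₀ < 0 :=
    LinearMap.apply_neg_of_mem_interior
      (interior_mono (fun x (hx : ∀ i, f i x ≤ 0) => hx i) hx₀) hfi
  have hmargin := LinearMap.mul_abs_apply_le_of_ball_subset hε
    (fun x hx => (interior_subset (hball hx) : x ∈ {x | ∀ i, f i x ≤ 0}) i) hz
  have hround : -ε⁻¹ * -f i x₀ ≤ f i ((fun j => (z j : ℝ)) - t • -x₀) := by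
    rw [neg_mul, neg_le]
    exact (neg_le_abs _).trans ((le_inv_mul_iff₀ hε).2 hmargin)
  have hM : M i ≤ (t - ε⁻¹) * -f i x₀ := by
    rw [← div_le_iff₀ (neg_pos.2 hneg)]
    linarith [ht i]
  calc M i ≤ t * -f i x₀ + -ε⁻¹ * -f i x₀ := by linarith
    _ ≤ f i (t • -x₀) + f i ((fun j => (z j : ℝ)) - t • -x₀) := by
        rw [map_smul, map_neg, smul_eq_mul]; linarith
    _ = f i (fun j => (z j : ℝ)) := by rw [← map_add, add_sub_cancel]

/-- Let `Γ = {ξ_1, ..., ξ_k}` factor through an epimorphism `ζ : G → ℤ^n`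
via linear forms `ξbar i`. If the cone `C_Γ = {x | ξbar i x ≤ 0 ∀ i}` is solid, then
`Λ̂_Γ = ⋃_{g ∈ G} g · Λ̂_Γ⁻`. -/
theorem stmt7 {G : Type*} [Group G] (n k : ℕ) (ζ : G → Fin n → ℤ)
    (hζhom : ∀ g h : G, ζ (g * h) = ζ g + ζ h) (hζsurj : Function.Surjective ζ)
    (ξbar : Fin k → ((Fin n → ℝ) →ₗ[ℝ] ℝ))
    (hsolid : (interior {x : Fin n → ℝ | ∀ i, ξbar i x ≤ 0}).Nonempty) :
    -- Λ̂_Γ = ⋃_g g · Λ̂_Γ⁻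
    {lam : G → ℤ | ∀ i, NovCond7 (fun g => ξbar i (fun j => (ζ g j : ℝ))) lam} =
      ⋃ g : G, (fun lam : G → ℤ => (fun u => lam (g⁻¹ * u))) ''
        {lam : G → ℤ |
          (∀ i, NovCond7 (fun h => ξbar i (fun j => (ζ h j : ℝ))) lam) ∧
          ∀ h : G, lam h ≠ 0 → ∀ i, ξbar i (fun j => (ζ h j : ℝ)) ≤ 0} := by
  have hadd : ∀ i g h, ξbar i (fun j => (ζ (g * h) j : ℝ)) =
      ξbar i (fun j => (ζ g j : ℝ)) + ξbar i (fun j => (ζ h j : ℝ)) := by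
    intro i g h
    rw [← map_add]
    congr 1
    ext j
    simp [hζhom]
  ext lam
  simp only [Set.mem_ofPred_eq, Set.mem_iUnion, Set.mem_image]
  constructor
  · intro hlam
    choose M hM using fun i => (hlam i).exists_forall_le
    obtain ⟨z, hz⟩ := exists_int_le_apply_of_nonempty_interior ξbar hsolid M
    obtain ⟨g, rfl⟩ := hζsurj z
    refine ⟨g, fun u => lam (g * u),
      ⟨fun i => (hlam i).comp_mul_left (hadd i) g, fun h hh i => ?_⟩, by simp⟩
    by_cases hi : ξbar i = 0
    · simp [hi]
    · linarith [hadd i g h, hM i _ hh, hz i hi]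
  · rintro ⟨g, lam', ⟨hlam', -⟩, rfl⟩ i
    exact (hlam' i).comp_mul_left (hadd i) g⁻¹
end

section
/- Let R be a commutative ring and k ≥ 1. For each i ∈ {1, ..., k}, the ring of special power series R[[[t_1, ..., t_k]]] embeds naturally (as a ring) into the power series ring in the single variable t_i with coefficients in the polynomial ring in the remaining variables: R[[[t_1, ..., t_k]]] ⊆ (R[t_1, ..., t_{i-1}, t_{i+1}, ..., t_k])[[t_i]]. -/
/-!
Renaming `σ` as `Option {j // j ≠ i}`, `MvPowerSeries.optionEquivLeft` regroups a power series
by powers of `X i`: it is a ring isomorphism onto `(MvPowerSeries {j // j ≠ i} R)⟦X⟧`. For a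
special series, the `n`-th coefficient of the image only involves the monomials whose exponent
has `i`-th entry `n`, and the special condition at `m = n` makes them finitely many. So every
coefficient is a polynomial, and since polynomials embed into power series, the isomorphism
restricts to an injective ring map from special series into `(MvPolynomial {j // j ≠ i} R)⟦X⟧`.
-/

open Finsupp

theorem Finsupp.embDomain_optionSubtypeNe_optionElim {σ : Type*} [DecidableEq σ] (i : σ)
    (J : {j // j ≠ i} →₀ ℕ) (n : ℕ) :
    embDomain (Equiv.optionSubtypeNe i).toEmbedding (J.optionElim n) =
      embDomain (Function.Embedding.subtype _) J + single i n := by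
  ext j
  by_cases h : j = i
  · subst h
    simpa [embDomain_of_notMem_range] using
      embDomain_apply_self (Equiv.optionSubtypeNe j).toEmbedding (J.optionElim n) none
  · have hJ := embDomain_apply_self (Function.Embedding.subtype (· ≠ i)) J ⟨j, h⟩
    simp only [Function.Embedding.subtype_apply] at hJ
    simpa [single_apply, Ne.symm h, hJ] using
      embDomain_apply_self (Equiv.optionSubtypeNe i).toEmbedding (J.optionElim n) (Option.some ⟨j, h⟩)

theorem PowerSeries.mem_range_map_of_forall_coeff_mem {S T : Type*} [Semiring S] [Semiring T]
    {f : S →+* T} {g : PowerSeries T} (h : ∀ n, PowerSeries.coeff n g ∈ Set.range f) :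
    g ∈ Set.range (PowerSeries.map f) := by
  choose p hp using h
  exact ⟨PowerSeries.mk p, PowerSeries.ext fun n ↦ by
    rw [PowerSeries.coeff_map, PowerSeries.coeff_mk, hp]⟩

noncomputable section

namespace MvPowerSeries

variable {σ R : Type*}

theorem mem_range_coe_of_finite [CommSemiring R] {g : MvPowerSeries σ R}
    (hg : {I | coeff I g ≠ 0}.Finite) :
    g ∈ Set.range ((↑) : MvPolynomial σ R → MvPowerSeries σ R) :=
  ⟨.ofCoeff (ofSupportFinite g hg), ext fun _ ↦ rfl⟩

section Special

variable [Semiring R]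

def IsSpecial (f : MvPowerSeries σ R) : Prop :=
  ∀ m : ℕ, {I : σ →₀ ℕ | (∃ j, I j ≤ m) ∧ coeff I f ≠ 0}.Finite

theorem isSpecial_zero : IsSpecial (0 : MvPowerSeries σ R) := fun _ ↦
  Set.finite_empty.subset fun _ ⟨_, hI⟩ ↦ hI (map_zero _)

theorem isSpecial_one : IsSpecial (1 : MvPowerSeries σ R) := by
  classical
  refine fun _ ↦ (Set.finite_singleton 0).subset fun I ⟨_, hI⟩ ↦ ?_
  by_contra hI0
  exact hI (by rw [coeff_one, if_neg (Set.mem_singleton_iff.not.mp hI0)])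

theorem IsSpecial.add {f g : MvPowerSeries σ R} (hf : IsSpecial f) (hg : IsSpecial g) :
    IsSpecial (f + g) := by
  refine fun m ↦ ((hf m).union (hg m)).subset fun I ⟨hIm, hI⟩ ↦ ?_
  by_cases hfI : coeff I f = 0
  · exact Or.inr ⟨hIm, by rwa [map_add, hfI, zero_add] at hI⟩
  · exact Or.inl ⟨hIm, hfI⟩

theorem IsSpecial.mul {f g : MvPowerSeries σ R} (hf : IsSpecial f) (hg : IsSpecial g) :
    IsSpecial (f * g) := by
  classical
  intro m
  refine (((hf m).prod (hg m)).image fun p ↦ p.1 + p.2).subset ?_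
  rintro I ⟨⟨j, hj⟩, hI⟩
  rw [coeff_mul] at hI
  obtain ⟨⟨I₁, I₂⟩, hI₁₂, hne⟩ := Finset.exists_ne_zero_of_sum_ne_zero hI
  rw [Finset.HasAntidiagonal.mem_antidiagonal] at hI₁₂
  subst hI₁₂
  have hj' : I₁ j + I₂ j ≤ m := hj
  exact ⟨(I₁, I₂), ⟨⟨⟨j, (by omega : I₁ j ≤ m)⟩, left_ne_zero_of_mul hne⟩,
    ⟨⟨j, (by omega : I₂ j ≤ m)⟩, right_ne_zero_of_mul hne⟩⟩, rfl⟩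

end Special

theorem IsSpecial.neg [Ring R] {f : MvPowerSeries σ R} (hf : IsSpecial f) : IsSpecial (-f) := by
  simpa [IsSpecial] using hf

variable (σ R) in
def specialSubring [Ring R] : Subring (MvPowerSeries σ R) where
  carrier := {f | IsSpecial f}
  zero_mem' := isSpecial_zero
  one_mem' := isSpecial_one
  add_mem' := IsSpecial.add
  mul_mem' := IsSpecial.mul
  neg_mem' := IsSpecial.neg

section EquivPowerSeriesAt

variable [CommSemiring R] [DecidableEq σ]

variable (R) in
def equivPowerSeriesAt (i : σ) :
    MvPowerSeries σ R ≃ₐ[R] PowerSeries (MvPowerSeries {j // j ≠ i} R) :=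
  (renameEquiv R (Equiv.optionSubtypeNe i).symm).trans (optionEquivLeft _ R)

theorem coeff_coeff_equivPowerSeriesAt (i : σ) (f : MvPowerSeries σ R) (n : ℕ)
    (J : {j // j ≠ i} →₀ ℕ) :
    coeff J (PowerSeries.coeff n (equivPowerSeriesAt R i f)) =
      coeff (embDomain (Function.Embedding.subtype _) J + single i n) f := by
  have hf : f = rename (Equiv.optionSubtypeNe i).toEmbedding
      (renameEquiv R (Equiv.optionSubtypeNe i).symm f) :=
    ((renameEquiv R (Equiv.optionSubtypeNe i).symm).symm_apply_apply f).symm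
  rw [equivPowerSeriesAt, AlgEquiv.trans_apply, coeff_coeff_optionEquivLeft]
  conv_rhs => rw [← embDomain_optionSubtypeNe_optionElim, hf, coeff_embDomain_rename]

theorem IsSpecial.finite_coeff_coeff_equivPowerSeriesAt {f : MvPowerSeries σ R}
    (hf : IsSpecial f) (i : σ) (n : ℕ) :
    {J | coeff J (PowerSeries.coeff n (equivPowerSeriesAt R i f)) ≠ 0}.Finite := by
  have hinj : Function.Injective fun J : {j // j ≠ i} →₀ ℕ ↦
      embDomain (Function.Embedding.subtype _) J + single i n := by
    simpa only [← embDomain_optionSubtypeNe_optionElim, Function.comp_def] using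
      (embDomain_injective _).comp (Function.LeftInverse.injective (some_optionElim n))
  refine ((hf n).preimage hinj.injOn).subset fun J hJ ↦ ⟨⟨i, ?_⟩, ?_⟩
  · simp [embDomain_of_notMem_range]
  · rwa [← coeff_coeff_equivPowerSeriesAt]

theorem IsSpecial.equivPowerSeriesAt_mem_range_map {f : MvPowerSeries σ R} (hf : IsSpecial f)
    (i : σ) : equivPowerSeriesAt R i f ∈
      Set.range (PowerSeries.map (MvPolynomial.coeToMvPowerSeries.ringHom (σ := {j // j ≠ i}))) :=
  PowerSeries.mem_range_map_of_forall_coeff_mem fun n ↦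
    mem_range_coe_of_finite (hf.finite_coeff_coeff_equivPowerSeriesAt i n)

end EquivPowerSeriesAt

section SpecialToPowerSeriesAt

variable [CommRing R] [DecidableEq σ]

/-- The coefficientwise coercion `(MvPolynomial _ R)⟦X⟧ → (MvPowerSeries _ R)⟦X⟧` is injective,
so `Function.invFun` of it is a ring isomorphism from its range. -/
def specialToPowerSeriesAt (i : σ) :
    specialSubring σ R →+* PowerSeries (MvPolynomial {j // j ≠ i} R) :=
  (RingEquiv.ofLeftInverseS (Function.leftInverse_invFun
      (PowerSeries.map_injective _ (MvPolynomial.coe_injective _ R)))).symm.toRingHom.comp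
    (((equivPowerSeriesAt R i).toRingHom.comp (specialSubring σ R).subtype).codRestrict _
      fun f ↦ f.2.equivPowerSeriesAt_mem_range_map i)

theorem map_coe_specialToPowerSeriesAt (i : σ) (f : specialSubring σ R) :
    PowerSeries.map MvPolynomial.coeToMvPowerSeries.ringHom (specialToPowerSeriesAt i f) =
      equivPowerSeriesAt R i f :=
  Function.invFun_eq (f.2.equivPowerSeriesAt_mem_range_map i)

theorem specialToPowerSeriesAt_injective (i : σ) :
    Function.Injective (specialToPowerSeriesAt (R := R) i) := by
  refine Function.Injective.of_comp
    (f := PowerSeries.map MvPolynomial.coeToMvPowerSeries.ringHom) ?_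
  simp only [Function.comp_def, map_coe_specialToPowerSeriesAt]
  exact (equivPowerSeriesAt R i).injective.comp Subtype.val_injective

theorem coeff_coeff_specialToPowerSeriesAt (i : σ) (f : specialSubring σ R) (n : ℕ)
    (J : {j // j ≠ i} →₀ ℕ) :
    MvPolynomial.coeff J (PowerSeries.coeff n (specialToPowerSeriesAt i f)) =
      coeff (embDomain (Function.Embedding.subtype _) J + single i n) (f : MvPowerSeries σ R) := by
  rw [← coeff_coeff_equivPowerSeriesAt, ← map_coe_specialToPowerSeriesAt, PowerSeries.coeff_map,
    MvPolynomial.coeToMvPowerSeries.ringHom_apply, MvPolynomial.coeff_coe]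

end SpecialToPowerSeriesAt

end MvPowerSeries

end

/-- The ring of special power series `R[[[t_1, ..., t_k]]]` embeds as a
ring into the power series ring in the single variable `t_i` with coefficients in the
polynomial ring in the remaining variables, the embedding regrouping a special series by
powers of `t_i` (so coefficients are matched in the natural way). -/
theorem stmt12 (k : ℕ) (R : Type*) [CommRing R] (i : Fin k) :
    ∃ S : Subring (MvPowerSeries (Fin k) R),
      (S : Set (MvPowerSeries (Fin k) R)) =
        {f | ∀ m : ℕ,
          {I : Fin k →₀ ℕ | (∃ j, I j ≤ m) ∧ MvPowerSeries.coeff (R := R) I f ≠ 0}.Finite} ∧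
      ∃ φ : S →+* PowerSeries (MvPolynomial {j : Fin k // j ≠ i} R),
        Function.Injective φ ∧
        ∀ (f : S) (n : ℕ) (J : {j : Fin k // j ≠ i} →₀ ℕ),
          MvPolynomial.coeff J (PowerSeries.coeff (R := MvPolynomial {j : Fin k // j ≠ i} R) n (φ f)) =
            MvPowerSeries.coeff (R := R)
              (Finsupp.embDomain ⟨Subtype.val, Subtype.val_injective⟩ J + Finsupp.single i n)
              (f : MvPowerSeries (Fin k) R) :=
  ⟨MvPowerSeries.specialSubring _ R, rfl, MvPowerSeries.specialToPowerSeriesAt i,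
    MvPowerSeries.specialToPowerSeriesAt_injective i,
    MvPowerSeries.coeff_coeff_specialToPowerSeriesAt i⟩
end

section
/- Let A be a Σ-twisted Laurent polynomial ring in variables τ_1, ..., τ_k over R, A_0 the left R-submodule generated by {τ^I : I ∈ N^k}, and for j ∈ {1, ..., k}, A_j the left R-submodule generated by {τ^I : I ∈ Z^k, i_j ≥ 0}. Let τ = τ_1 ⋯ τ_k and n ∈ N. Then the direct sum J_n = ⊕_j J_{n,j} : A_0/τ^n A_0 → ⊕_j (A_j / τ_j^n A_j) of the maps induced by the inclusions A_0 ↪ A_j is injective. -/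
/-!
Conjugation by each `τ_i` preserves `R` and the commutators of the `τ_i` are units of `R`, so the
`τ_i` commute modulo `Rˣ`: in the quotient of the conjugation stabilizer of `R` by `Rˣ`, the
ordered monomials `τ^I` form a homomorphic image of `ℤ^k`. Hence `τ^L τ^K = u τ^(L+K)` with
`u ∈ Rˣ`, and left multiplication by an element of the class of `τ^L` (such as `τ_j^n` or
`t^(-n)`) sends an `R`-combination of monomials supported on `S` to one supported on `L + S`.
By uniqueness of coefficients, `a = τ_j^n b` with `b ∈ A_j` forces every exponent `I` of `a` to
have `i_j ≥ n`. If this holds for all `j`, then `t^(-n) a` has exponents in `ℕ^k`, so it lies in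
`A_0`, and `a = t^n (t^(-n) a)`.
-/
open scoped commutatorElement

section ZpowProd

variable {G : Type*} [Group G] {k : ℕ} {g : Fin k → G}

lemma pairwise_commute_zpowersHom (hg : Pairwise fun i j => Commute (g i) (g j)) :
    Pairwise fun i j => ∀ x y : Multiplicative ℤ,
      Commute (zpowersHom G (g i) x) (zpowersHom G (g j) y) :=
  fun _ _ hij _ _ => (hg hij).zpow_zpow _ _

variable (g) in
noncomputable def zpowProdHom (hg : Pairwise fun i j => Commute (g i) (g j)) :
    Multiplicative (Fin k →₀ ℤ) →* G :=
  (MonoidHom.noncommPiCoprod (fun i => zpowersHom G (g i))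
      (pairwise_commute_zpowersHom hg)).comp
    ((MulEquiv.funMultiplicative _ _).toMonoidHom.comp
      (Finsupp.coeFnAddHom (M := ℤ)).toMultiplicative)

lemma zpowProdHom_ofAdd (hg : Pairwise fun i j => Commute (g i) (g j)) (I : Fin k →₀ ℤ) :
    zpowProdHom g hg (.ofAdd I) = (List.ofFn fun i => g i ^ I i).prod := by
  simp only [zpowProdHom, MonoidHom.comp_apply, MonoidHom.noncommPiCoprod, MonoidHom.coe_mk,
    OneHom.coe_mk, Finset.noncommProd, Fin.univ_val_map]
  rw [Multiset.noncommProd_coe]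
  rfl

lemma zpowProdHom_ofAdd_single (hg : Pairwise fun i j => Commute (g i) (g j)) (j : Fin k)
    (m : ℤ) : zpowProdHom g hg (.ofAdd (Finsupp.single j m)) = g j ^ m := by
  have hsingle : (MulEquiv.funMultiplicative _ _).toMonoidHom
      ((Finsupp.coeFnAddHom (M := ℤ)).toMultiplicative (.ofAdd (Finsupp.single j m)))
        = Pi.mulSingle j (.ofAdd m) := by
    ext i
    by_cases h : i = j
    · subst h; simp
    · simp [h]
  rw [zpowProdHom, MonoidHom.comp_apply, MonoidHom.comp_apply, hsingle,
    MonoidHom.noncommPiCoprod_mulSingle]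
  rfl

end ZpowProd

section Monomial

variable {G : Type*} [Group G] {k : ℕ}

def orderedMonomial (g : Fin k → G) (I : Fin k →₀ ℤ) : G :=
  (List.ofFn fun i => g i ^ I i).prod

variable {H : Subgroup G} [H.Normal] {g : Fin k → G}

lemma pairwise_commute_mk_of_commutator_mem (hg : ∀ i j, ⁅g i, g j⁆ ∈ H) :
    Pairwise fun i j => Commute (g i : G ⧸ H) (g j) := by
  intro i j _
  rw [← commutatorElement_eq_one_iff_commute, ← QuotientGroup.mk'_apply,
    ← QuotientGroup.mk'_apply, ← map_commutatorElement, QuotientGroup.mk'_apply,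
    QuotientGroup.eq_one_iff]
  exact hg i j

noncomputable def monomialClassHom (hg : ∀ i j, ⁅g i, g j⁆ ∈ H) :
    Multiplicative (Fin k →₀ ℤ) →* G ⧸ H :=
  zpowProdHom _ (pairwise_commute_mk_of_commutator_mem hg)

lemma mk_orderedMonomial (hg : ∀ i j, ⁅g i, g j⁆ ∈ H) (I : Fin k →₀ ℤ) :
    ((orderedMonomial g I : G) : G ⧸ H) = monomialClassHom hg (.ofAdd I) := by
  rw [monomialClassHom, zpowProdHom_ofAdd, orderedMonomial, ← QuotientGroup.mk'_apply,
    map_list_prod, List.map_ofFn]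
  rfl

lemma mul_orderedMonomial_div_mem (hg : ∀ i j, ⁅g i, g j⁆ ∈ H) {w : G} {L : Fin k →₀ ℤ}
    (hw : (w : G ⧸ H) = monomialClassHom hg (.ofAdd L))
    (K : Fin k →₀ ℤ) : w * orderedMonomial g K / orderedMonomial g (L + K) ∈ H := by
  rw [← QuotientGroup.eq_iff_div_mem, QuotientGroup.mk_mul, hw, mk_orderedMonomial hg,
    mk_orderedMonomial hg, ← map_mul, ← ofAdd_add]

lemma mk_pow_eq_monomialClassHom (hg : ∀ i j, ⁅g i, g j⁆ ∈ H) (j : Fin k) (n : ℕ) :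
    ((g j ^ n : G) : G ⧸ H) = monomialClassHom hg (.ofAdd (Finsupp.single j n)) := by
  rw [monomialClassHom, zpowProdHom_ofAdd_single, zpow_natCast, QuotientGroup.mk_pow]

lemma mk_prod_pow_inv_eq_monomialClassHom (hg : ∀ i j, ⁅g i, g j⁆ ∈ H) (n : ℕ) :
    ((((List.ofFn g).prod ^ n)⁻¹ : G) : G ⧸ H) = monomialClassHom hg
      (.ofAdd (-(n • Finsupp.equivFunOnFinite.symm 1))) := by
  rw [ofAdd_neg, ofAdd_nsmul, map_inv, map_pow, QuotientGroup.mk_inv, QuotientGroup.mk_pow,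
    monomialClassHom, zpowProdHom_ofAdd, ← QuotientGroup.mk'_apply, map_list_prod, List.map_ofFn]
  simp [Function.comp_def]

end Monomial

section LinearCombination

variable {A : Type*} [Ring A] {R : Subring A} {ι : Type*} [AddCommGroup ι]

lemma exists_mul_linearCombination_eq (v : ι → A) {x : A} {L : ι}
    (hx : ∀ (r : R) K, ∃ r' : R, x * (r * v K) = r' * v (L + K)) (c : ι →₀ R) :
    ∃ c' : ι →₀ R, (∀ I ∈ c'.support, I - L ∈ c.support) ∧
      x * Finsupp.linearCombination R v c = Finsupp.linearCombination R v c' := by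
  classical
  choose f hf using hx
  refine ⟨c.sum fun K r => Finsupp.single (L + K) (f r K), fun I hI => ?_, ?_⟩
  · obtain ⟨K, hK, hIK⟩ := Finset.mem_biUnion.mp (Finsupp.support_sum hI)
    rw [Finset.mem_singleton.mp (Finsupp.support_single_subset hIK), add_sub_cancel_left]
    exact hK
  · rw [map_finsuppSum, Finsupp.linearCombination_apply, Finsupp.mul_sum]
    refine Finsupp.sum_congr fun K _ => ?_
    rw [Finsupp.linearCombination_single]
    exact hf _ _

end LinearCombination

namespace TwistedLaurent

variable {A : Type*} [Ring A]

def conjStabilizer (R : Subring A) : Subgroup Aˣ where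
  carrier := {w | ∀ x ∈ R, (w : A) * x * ↑w⁻¹ ∈ R ∧ (↑w⁻¹ : A) * x * w ∈ R}
  one_mem' x hx := by simpa using hx
  mul_mem' {a b} ha hb x hx :=
    ⟨by simpa [mul_assoc] using (ha _ (hb x hx).1).1,
      by simpa [mul_assoc] using (hb _ (ha x hx).2).2⟩
  inv_mem' {a} ha x hx := by simp [(ha x hx).symm]

lemma mem_conjStabilizer_of_conj_eq {R : Subring A} {w : Aˣ} (σ : R ≃ R)
    (h : ∀ r : R, (w : A) * r * ↑w⁻¹ = σ r) : w ∈ conjStabilizer R := by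
  intro x hx
  refine ⟨h ⟨x, hx⟩ ▸ (σ _).2, ?_⟩
  have hx' : x = (w : A) * σ.symm ⟨x, hx⟩ * ↑w⁻¹ := by rw [h, Equiv.apply_symm_apply]
  rw [hx']
  simp [mul_assoc]

abbrev coeffUnits (R : Subring A) : Subgroup (conjStabilizer R) :=
  (R.toSubmonoid.units).subgroupOf (conjStabilizer R)

instance (R : Subring A) : (coeffUnits R).Normal where
  conj_mem u hu w := by
    rw [Subgroup.mem_subgroupOf, Submonoid.mem_units_iff] at hu ⊢
    exact ⟨by simpa [mul_assoc] using (w.2 _ hu.1).1, by simpa [mul_assoc] using (w.2 _ hu.2).1⟩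

variable {R : Subring A}

lemma exists_mul_mul_eq_of_div_mem {w u v : conjStabilizer R} (h : w * u / v ∈ coeffUnits R)
    (r : R) : ∃ r' : R, ((w : Aˣ) : A) * (r * ((u : Aˣ) : A)) = r' * ((v : Aˣ) : A) := by
  have hwu : (w : Aˣ) * u = ((w * u / v : conjStabilizer R) : Aˣ) * v := by simp
  refine ⟨⟨(w : Aˣ) * r * ↑(w : Aˣ)⁻¹ * ((w * u / v : conjStabilizer R) : Aˣ),
    R.mul_mem (w.2 r r.2).1 h.1⟩, ?_⟩
  rw [mul_assoc _ _ ((v : Aˣ) : A), ← Units.val_mul, ← hwu]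
  simp [mul_assoc]

variable {k : ℕ}

def monomial (g : Fin k → conjStabilizer R) (I : Fin k →₀ ℤ) : A :=
  ((orderedMonomial g I : conjStabilizer R) : Aˣ)

variable {g : Fin k → conjStabilizer R}

lemma le_of_mem_support_of_eq_pow_mul (hg : ∀ i j, ⁅g i, g j⁆ ∈ coeffUnits R)
    (hli : LinearIndependent R (monomial g)) (j : Fin k) (n : ℕ)
    {c d : (Fin k →₀ ℤ) →₀ R} (hd : ∀ I ∈ d.support, 0 ≤ I j)
    (h : Finsupp.linearCombination R (monomial g) c
      = ((g j : Aˣ) : A) ^ n * Finsupp.linearCombination R (monomial g) d) :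
    ∀ I ∈ c.support, (n : ℤ) ≤ I j := by
  obtain ⟨d', hd', hdd'⟩ := exists_mul_linearCombination_eq (monomial g) (fun r K =>
    exists_mul_mul_eq_of_div_mem
      (mul_orderedMonomial_div_mem hg (mk_pow_eq_monomialClassHom hg j n) K) r) d
  obtain rfl : c = d' := hli (h.trans (by simpa using hdd'))
  intro I hI
  simpa using hd _ (hd' I hI)

lemma exists_eq_prod_pow_mul (hg : ∀ i j, ⁅g i, g j⁆ ∈ coeffUnits R) (n : ℕ)
    {c : (Fin k →₀ ℤ) →₀ R} (hge : ∀ I ∈ c.support, ∀ j, (n : ℤ) ≤ I j) :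
    ∃ c' : (Fin k →₀ ℤ) →₀ R, (∀ I ∈ c'.support, ∀ j, 0 ≤ I j) ∧
      Finsupp.linearCombination R (monomial g) c
        = ((((List.ofFn g).prod : conjStabilizer R) : Aˣ) : A) ^ n
          * Finsupp.linearCombination R (monomial g) c' := by
  obtain ⟨c', hc', h⟩ := exists_mul_linearCombination_eq (monomial g) (fun r K =>
    exists_mul_mul_eq_of_div_mem
      (mul_orderedMonomial_div_mem hg (mk_prod_pow_inv_eq_monomialClassHom hg n) K) r) c
  refine ⟨c', fun I hI j => ?_, ?_⟩
  · simpa only [sub_neg_eq_add, Finsupp.coe_add, Finsupp.coe_smul,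
      Finsupp.coe_equivFunOnFinite_symm, nsmul_eq_mul, mul_one, Pi.add_apply, Pi.natCast_apply,
      le_add_iff_nonneg_left] using hge _ (hc' I hI) j
  · rw [← h, ← Units.val_pow_eq_pow_val, ← Subgroup.coe_pow, Subgroup.coe_inv,
      Units.mul_inv_cancel_left]

end TwistedLaurent

/-- Injectivity of `J_n`, element-wise: an element of `A_0` lying in every `τ_j^n A_j` lies in
`τ^n A_0`. -/
theorem stmt14 {A : Type*} [Ring A] (k : ℕ) (R : Subring A) (σ : Fin k → (R ≃+* R))
    (τ : Fin k → Aˣ)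
    (hcomm : ∀ i j, ((τ i * τ j * (τ i)⁻¹ * (τ j)⁻¹ : Aˣ) : A) ∈ R)
    (hσ : ∀ i (r : R), (τ i : A) * (r : A) * ((τ i)⁻¹ : Aˣ) = ((σ i r : R) : A))
    (mL : (Fin k →₀ ℤ) → A)
    (hmL : ∀ I, mL I = ((List.ofFn fun i => τ i ^ I i).prod : Aˣ))
    (hbasis : ∀ a : A, ∃! c : (Fin k →₀ ℤ) →₀ R,
      a = c.sum fun I r => (r : A) * mL I)
    (A0 : Set A)
    (hA0 : A0 = {a | ∃ c : (Fin k →₀ ℤ) →₀ R,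
      (∀ I ∈ c.support, ∀ j, 0 ≤ I j) ∧ a = c.sum fun I r => (r : A) * mL I})
    (Aj : Fin k → Set A)
    (hAj : ∀ j, Aj j = {a | ∃ c : (Fin k →₀ ℤ) →₀ R,
      (∀ I ∈ c.support, 0 ≤ I j) ∧ a = c.sum fun I r => (r : A) * mL I})
    (t : A) (ht : t = ((List.ofFn fun i => τ i).prod : Aˣ)) (n : ℕ) :
    ∀ a ∈ A0, (∀ j, ∃ b ∈ Aj j, a = (τ j : A) ^ n * b) →
      ∃ b ∈ A0, a = t ^ n * b := by
  open TwistedLaurent in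
  intro a _ hdiv
  let g i : conjStabilizer R := ⟨τ i, mem_conjStabilizer_of_conj_eq (σ i).toEquiv (hσ i)⟩
  obtain rfl : mL = monomial g := by
    funext I
    simp [hmL, monomial, orderedMonomial, List.map_ofFn, Function.comp_def, g]
  obtain rfl : t = ((((List.ofFn g).prod : conjStabilizer R) : Aˣ) : A) := by
    simp [ht, List.map_ofFn, Function.comp_def, g]
  have hg : ∀ i j, ⁅g i, g j⁆ ∈ coeffUnits R := fun i j =>
    (Submonoid.mem_units_iff _ _).mpr
      ⟨hcomm i j, by simpa [commutatorElement_def, mul_assoc] using hcomm j i⟩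
  have hli : LinearIndependent R (monomial g) := fun c d h => (hbasis _).unique rfl h
  obtain ⟨c, rfl, -⟩ := hbasis a
  have hge : ∀ I ∈ c.support, ∀ j, (n : ℤ) ≤ I j := fun I hI j => by
    obtain ⟨b, hb, hab⟩ := hdiv j
    rw [hAj] at hb
    obtain ⟨d, hd, rfl⟩ := hb
    exact le_of_mem_support_of_eq_pow_mul hg hli j n hd hab I hI
  obtain ⟨c', hc', h⟩ := exists_eq_prod_pow_mul hg n hge
  exact ⟨_, hA0 ▸ ⟨c', hc', rfl⟩, h⟩
end

section
/- Let A be a Σ-twisted polynomial ring in τ_1, ..., τ_k over R, τ = τ_1⋯τ_k, Â = lim← A/τ^n, and for j ∈ {1,...,k} let Â_j = lim← A_j/τ_j^n where A_j is the subring of the associated twisted Laurent polynomial ring spanned by monomials τ^I with i_j ≥ 0. Then for every j the natural ring homomorphism Ĵ_j : Â → Â_j is injective. -/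
/-!
Expand elements of `A` in the monomial basis `τ^I`. Conjugation by each `τ_i` preserves `R`, and
modulo the units of `R` the `τ_i` commute, so left multiplication by a unit congruent to `τ^V`
modulo `Rˣ` shifts supports by `V`. Hence `t^n A_0` is the span of the monomials all of whose
exponents are `≥ n`, and `τ_j^n A_j` lies in the span of those with `j`-th exponent `≥ n`.
For a compatible sequence `a`, the coefficient of `a n` at an exponent `I` with some `I_i < n` is
the same in every later `a m`; if `a` lies in the kernel of `Ĵ_j`, it vanishes once `m > I_j`.
-/

open Submodule

namespace List

variable {G : Type*} [Group G] {k : ℕ} (g : Fin k → G) (hg : ∀ i j, Commute (g i) (g j))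
include hg

theorem prod_ofFn_zpow_eq_noncommPiCoprod (I : Fin k → ℤ) :
    (ofFn fun i => g i ^ I i).prod =
      MonoidHom.noncommPiCoprod (fun i => zpowersHom G (g i))
        (fun i j _ x y => (hg i j).zpow_zpow x.toAdd y.toAdd)
        (fun i => Multiplicative.ofAdd (I i)) := by
  simp [MonoidHom.noncommPiCoprod, Finset.noncommProd]

theorem prod_ofFn_zpow_add (V W : Fin k → ℤ) :
    (ofFn fun i => g i ^ (V i + W i)).prod =
      (ofFn fun i => g i ^ V i).prod * (ofFn fun i => g i ^ W i).prod := by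
  simp only [prod_ofFn_zpow_eq_noncommPiCoprod g hg, ← map_mul]
  rfl

theorem prod_ofFn_zpow_single (j : Fin k) (m : ℤ) :
    (ofFn fun i => g i ^ Finsupp.single j m i).prod = g j ^ m := by
  classical
  have hsingle : (fun i => Multiplicative.ofAdd (Finsupp.single j m i)) =
      Pi.mulSingle j (Multiplicative.ofAdd m) := by
    ext i
    by_cases h : i = j <;> simp [h]
  rw [prod_ofFn_zpow_eq_noncommPiCoprod g hg, hsingle]
  exact MonoidHom.noncommPiCoprod_mulSingle (ϕ := fun i => zpowersHom G (g i)) j _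

end List

theorem AddMonoidHom.apply_mem_span_image_image {ι R M : Type*} [Semiring R] [AddCommMonoid M]
    [Module R M] {v : ι → M} (f : M →+ M) (g : ι → ι)
    (hf : ∀ i (r : R), ∃ r' : R, f (r • v i) = r' • v (g i)) {s : Set ι} {x : M}
    (hx : x ∈ span R (v '' s)) : f x ∈ span R (v '' (g '' s)) := by
  obtain ⟨l, hl, rfl⟩ := (Finsupp.mem_span_image_iff_linearCombination R).1 hx
  rw [Finsupp.linearCombination_apply, map_finsuppSum]
  refine sum_mem fun i hi => ?_
  obtain ⟨r', hr'⟩ := hf i (l i)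
  simp only [hr']
  exact smul_mem _ _ (subset_span ⟨g i, ⟨i, hl hi, rfl⟩, rfl⟩)

namespace Module.Basis

variable {ι R M : Type*} [Semiring R] [AddCommMonoid M] [Module R M]

noncomputable def ofExistsUnique (v : ι → M)
    (h : ∀ x, ∃! c, Finsupp.linearCombination R v c = x) : Basis ι R M :=
  .ofRepr (LinearEquiv.ofBijective _ ((Function.bijective_iff_existsUnique _).2 h)).symm

@[simp]
theorem coe_ofExistsUnique (v : ι → M) (h : ∀ x, ∃! c, Finsupp.linearCombination R v c = x) :
    ⇑(ofExistsUnique v h) = v := by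
  ext i
  simp [ofExistsUnique]

end Module.Basis

theorem Finsupp.support_subset_of_support_sub_subset {ι G : Type*} [AddGroup G]
    (c : ℕ → ι →₀ G) {D E : ℕ → Set ι} (hD : Antitone D) (hE : Antitone E)
    (hE₀ : ⋂ n, E n = ∅) (hcD : ∀ n, ↑(c (n + 1) - c n).support ⊆ D n)
    (hcE : ∀ n, ↑(c n).support ⊆ E n) (n : ℕ) : ↑(c n).support ⊆ D n := by
  intro I hI
  by_contra hID
  have hconst : ∀ m ≥ n, c m I = c n I := by
    intro m hm
    induction m, hm using Nat.le_induction with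
    | base => rfl
    | succ m hnm ih =>
      have hsub : I ∉ (c (m + 1) - c m).support := fun h => hID (hD hnm (hcD m h))
      rw [← ih, ← sub_eq_zero]
      simpa using hsub
  obtain ⟨m, hm⟩ : ∃ m, I ∉ E m := by
    simpa using Set.eq_empty_iff_forall_notMem.1 hE₀ I
  refine hm (hE (le_max_right n m) (hcE _ ?_))
  simpa [hconst _ (le_max_left n m)] using hI

theorem Finsupp.support_subset_setOf_forall_le {κ G : Type*} [AddGroup G]
    (c : ℕ → (κ →₀ ℤ) →₀ G) (j : κ)
    (hcompat : ∀ n : ℕ,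
      ↑(c (n + 1) - c n).support ⊆ {I : κ →₀ ℤ | ∀ i, (n : ℤ) ≤ I i})
    (hker : ∀ n : ℕ, ↑(c n).support ⊆ {I : κ →₀ ℤ | (n : ℤ) ≤ I j}) (n : ℕ) :
    ↑(c n).support ⊆ {I : κ →₀ ℤ | ∀ i, (n : ℤ) ≤ I i} :=
  support_subset_of_support_sub_subset c
    (D := fun n : ℕ => {I | ∀ i, (n : ℤ) ≤ I i})
    (E := fun n : ℕ => {I | (n : ℤ) ≤ I j})
    (fun _ _ hmn _ hI i => le_trans (by exact_mod_cast hmn) (hI i))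
    (fun _ _ hmn I (hI : _ ≤ I j) => le_trans (by exact_mod_cast hmn) hI)
    (Set.eq_empty_iff_forall_notMem.2 fun I hI => by
      simpa using Set.mem_iInter.1 hI ((I j).toNat + 1))
    hcompat hker n

namespace Subring

variable {A : Type*} [Ring A] (R : Subring A)

theorem setOf_exists_sum_mul_eq {ι : Type*} (v : ι → A) (p : ι → Prop) :
    {a | ∃ c : ι →₀ R, (∀ i ∈ c.support, p i) ∧ a = c.sum fun i r => (r : A) * v i} =
      span R (v '' {i | p i}) := by
  ext a
  simp only [Set.mem_ofPred_eq, SetLike.mem_coe, Finsupp.mem_span_image_iff_linearCombination,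
    Finsupp.mem_supported, Finsupp.linearCombination_apply, smul_def, smul_eq_mul,
    eq_comm (a := a)]
  rfl

def unitsNormalizer : Subgroup Aˣ where
  carrier := {w | ∀ r, (w : A) * r * ↑w⁻¹ ∈ R ↔ r ∈ R}
  mul_mem' {x y} hx hy r := by
    simpa [mul_assoc] using (hx (y * r * ↑y⁻¹)).trans (hy r)
  one_mem' := by simp
  inv_mem' {x} hx r := by
    simpa [mul_assoc] using (hx (↑x⁻¹ * r * x)).symm

variable {R}

theorem mem_unitsNormalizer_of_conj (w : Aˣ) (σ : R ≃+* R)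
    (hσ : ∀ r : R, (w : A) * r * ↑w⁻¹ = σ r) : w ∈ R.unitsNormalizer := by
  intro r
  refine ⟨fun hr => ?_, fun hr => hσ ⟨r, hr⟩ ▸ (σ _).2⟩
  have hconj : (w : A) * r * ↑w⁻¹ = w * ↑(σ.symm ⟨_, hr⟩) * ↑w⁻¹ := by
    rw [hσ, σ.apply_symm_apply]
  rw [Units.mul_left_inj, Units.mul_right_inj] at hconj
  exact hconj ▸ (σ.symm _).2

instance : (R.toSubmonoid.units.subgroupOf R.unitsNormalizer).Normal where
  conj_mem u hu w := by
    simp only [Subgroup.mem_subgroupOf, Submonoid.mem_units_iff] at hu ⊢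
    exact ⟨by simpa using (w.2 _).2 hu.1, by simpa [mul_assoc] using (w.2 _).2 hu.2⟩

theorem exists_mul_mul_eq_mul {w u v : Aˣ} (hw : w ∈ R.unitsNormalizer)
    (huv : ((w * u * v⁻¹ : Aˣ) : A) ∈ R) {r : A} (hr : r ∈ R) :
    ∃ r' ∈ R, (w : A) * (r * u) = r' * v :=
  ⟨_, R.mul_mem ((hw r).2 hr) huv, by simp [mul_assoc]⟩

variable (R) in
abbrev UnitsNormalizerQuotient :=
  R.unitsNormalizer ⧸ R.toSubmonoid.units.subgroupOf R.unitsNormalizer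

end Subring

section TwistedMonomial

variable {A : Type*} [Ring A] {R : Subring A} {k : ℕ} (τ : Fin k → R.unitsNormalizer)

def twistedMonomialUnit (I : Fin k →₀ ℤ) : R.unitsNormalizer :=
  (List.ofFn fun i => τ i ^ I i).prod

abbrev twistedMonomial (I : Fin k →₀ ℤ) : A :=
  ((twistedMonomialUnit τ I : Aˣ) : A)

theorem coe_twistedMonomialUnit (I : Fin k →₀ ℤ) :
    ((twistedMonomialUnit τ I : Aˣ) : A) =
      ((List.ofFn fun i => (τ i : Aˣ) ^ I i).prod : Aˣ) := by
  simp [twistedMonomialUnit, Function.comp_def]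

theorem mk_twistedMonomialUnit (I : Fin k →₀ ℤ) :
    (twistedMonomialUnit τ I : R.UnitsNormalizerQuotient) =
      (List.ofFn fun i => (τ i : R.UnitsNormalizerQuotient) ^ I i).prod := by
  rw [twistedMonomialUnit, ← QuotientGroup.mk'_apply, map_list_prod, List.map_ofFn]
  simp [Function.comp_def]

variable {τ} (hcomm : ∀ i j,
    (((τ i * τ j * (τ i)⁻¹ * (τ j)⁻¹ : R.unitsNormalizer) : Aˣ) : A) ∈ R)
include hcomm

theorem commute_mk_of_commutator_mem (i j : Fin k) :
    Commute (τ i : R.UnitsNormalizerQuotient) (τ j) := by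
  have h : ((τ i * τ j * (τ i)⁻¹ * (τ j)⁻¹ : R.unitsNormalizer) :
      R.UnitsNormalizerQuotient) = 1 := by
    rw [QuotientGroup.eq_one_iff, Subgroup.mem_subgroupOf, Submonoid.mem_units_iff]
    refine ⟨hcomm i j, ?_⟩
    simpa [mul_assoc] using hcomm j i
  rwa [← commutatorElement_eq_one_iff_commute, commutatorElement_def]

variable (τ) in
noncomputable def twistedMonomialHom :
    Multiplicative (Fin k →₀ ℤ) →* R.UnitsNormalizerQuotient :=
  MonoidHom.mk' (fun V => (twistedMonomialUnit τ V.toAdd : R.UnitsNormalizerQuotient))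
    fun V W => by
      simpa only [mk_twistedMonomialUnit, toAdd_mul, Finsupp.coe_add, Pi.add_apply] using
        List.prod_ofFn_zpow_add _ (commute_mk_of_commutator_mem hcomm) V.toAdd W.toAdd

variable (τ) in
theorem twistedMonomialHom_ofAdd (V : Fin k →₀ ℤ) :
    twistedMonomialHom τ hcomm (.ofAdd V) = twistedMonomialUnit τ V :=
  rfl

theorem twistedMonomialHom_single (j : Fin k) (m : ℤ) :
    twistedMonomialHom τ hcomm (.ofAdd (Finsupp.single j m)) =
      (τ j : R.UnitsNormalizerQuotient) ^ m := by
  rw [twistedMonomialHom_ofAdd, mk_twistedMonomialUnit]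
  exact List.prod_ofFn_zpow_single _ (commute_mk_of_commutator_mem hcomm) j m

theorem mul_mem_span_twistedMonomial {w : R.unitsNormalizer} {V : Fin k →₀ ℤ}
    (hw : (w : R.UnitsNormalizerQuotient) = twistedMonomialHom τ hcomm (.ofAdd V))
    {s : Set (Fin k →₀ ℤ)} {x : A} (hx : x ∈ span R (twistedMonomial τ '' s)) :
    ((w : Aˣ) : A) * x ∈ span R (twistedMonomial τ '' ((V + ·) '' s)) := by
  refine (AddMonoidHom.mulLeft ((w : Aˣ) : A)).apply_mem_span_image_image _
    (fun I r => ?_) hx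
  have hmk : ((w * twistedMonomialUnit τ I * (twistedMonomialUnit τ (V + I))⁻¹ :
      R.unitsNormalizer) : R.UnitsNormalizerQuotient) = 1 := by
    rw [QuotientGroup.mk_mul, QuotientGroup.mk_mul, QuotientGroup.mk_inv, hw,
      ← twistedMonomialHom_ofAdd τ hcomm, ← twistedMonomialHom_ofAdd τ hcomm, ← map_mul,
      ← map_inv, ← map_mul, ofAdd_add, mul_inv_cancel, map_one]
  rw [QuotientGroup.eq_one_iff, Subgroup.mem_subgroupOf, Submonoid.mem_units_iff] at hmk
  obtain ⟨r', hr', h⟩ := Subring.exists_mul_mul_eq_mul w.2 hmk.1 r.2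
  exact ⟨⟨r', hr'⟩, h⟩

theorem twistedMonomial_one_pow_mul_mem_span (n : ℕ) {y : A}
    (hy : y ∈ span R (twistedMonomial τ '' {I | ∀ i, 0 ≤ I i})) :
    twistedMonomial τ (Finsupp.equivFunOnFinite.symm 1) ^ n * y ∈
      span R (twistedMonomial τ '' {I | ∀ i, (n : ℤ) ≤ I i}) := by
  have h := mul_mem_span_twistedMonomial hcomm
    (w := twistedMonomialUnit τ (Finsupp.equivFunOnFinite.symm 1) ^ n)
    (V := n • Finsupp.equivFunOnFinite.symm 1)
    (by rw [QuotientGroup.mk_pow, ofAdd_nsmul, map_pow, twistedMonomialHom_ofAdd]) hy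
  rw [Subgroup.coe_pow, Units.val_pow_eq_pow_val] at h
  refine span_mono (Set.image_mono ?_) h
  rintro _ ⟨I, hI, rfl⟩ i
  simpa using hI i

theorem exists_eq_twistedMonomial_one_pow_mul (n : ℕ) {x : A}
    (hx : x ∈ span R (twistedMonomial τ '' {I | ∀ i, (n : ℤ) ≤ I i})) :
    ∃ y ∈ span R (twistedMonomial τ '' {I | ∀ i, 0 ≤ I i}),
      x = twistedMonomial τ (Finsupp.equivFunOnFinite.symm 1) ^ n * y := by
  set u := twistedMonomialUnit τ (Finsupp.equivFunOnFinite.symm 1) ^ n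
  have h := mul_mem_span_twistedMonomial hcomm (w := u⁻¹)
    (V := -(n • Finsupp.equivFunOnFinite.symm 1))
    (by rw [QuotientGroup.mk_inv, QuotientGroup.mk_pow, ofAdd_neg, ofAdd_nsmul, map_inv, map_pow,
      twistedMonomialHom_ofAdd]) hx
  refine ⟨_, span_mono (Set.image_mono ?_) h, ?_⟩
  · rintro _ ⟨I, hI, rfl⟩ i
    simpa using hI i
  · rw [show twistedMonomial τ (Finsupp.equivFunOnFinite.symm 1) ^ n = ((u : Aˣ) : A) by
        simp [u],
      Subgroup.coe_inv, Units.mul_inv_cancel_left]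

theorem pow_mul_mem_span_twistedMonomial (j : Fin k) (n : ℕ) {y : A}
    (hy : y ∈ span R (twistedMonomial τ '' {I | 0 ≤ I j})) :
    ((τ j : Aˣ) : A) ^ n * y ∈ span R (twistedMonomial τ '' {I | (n : ℤ) ≤ I j}) := by
  have h := mul_mem_span_twistedMonomial hcomm (w := τ j ^ n) (V := n • Finsupp.single j 1)
    (by rw [QuotientGroup.mk_pow, ofAdd_nsmul, map_pow, twistedMonomialHom_single, zpow_one]) hy
  rw [Subgroup.coe_pow, Units.val_pow_eq_pow_val] at h
  refine span_mono (Set.image_mono ?_) h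
  rintro _ ⟨I, hI, rfl⟩
  simpa using hI

end TwistedMonomial

theorem stmt16_general {A : Type*} [Ring A] (k : ℕ) (R : Subring A) (σ : Fin k → (R ≃+* R))
    (τ : Fin k → Aˣ)
    (hcomm : ∀ i j, ((τ i * τ j * (τ i)⁻¹ * (τ j)⁻¹ : Aˣ) : A) ∈ R)
    (hσ : ∀ i (r : R), (τ i : A) * (r : A) * ((τ i)⁻¹ : Aˣ) = ((σ i r : R) : A))
    (mL : (Fin k →₀ ℤ) → A)
    (hmL : ∀ I, mL I = ((List.ofFn fun i => τ i ^ I i).prod : Aˣ))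
    (hbasis : ∀ a : A, ∃! c : (Fin k →₀ ℤ) →₀ R,
      a = c.sum fun I r => (r : A) * mL I)
    (A0 : Set A)
    (hA0 : A0 = {a | ∃ c : (Fin k →₀ ℤ) →₀ R,
      (∀ I ∈ c.support, ∀ j, 0 ≤ I j) ∧ a = c.sum fun I r => (r : A) * mL I})
    (Aj : Fin k → Set A)
    (hAj : ∀ j, Aj j = {a | ∃ c : (Fin k →₀ ℤ) →₀ R,
      (∀ I ∈ c.support, 0 ≤ I j) ∧ a = c.sum fun I r => (r : A) * mL I})
    (t : A) (ht : t = ((List.ofFn fun i => τ i).prod : Aˣ))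
    (j : Fin k) (a : ℕ → A)
    -- `a` represents an element of Â : components in A_0, compatible modulo τ^n A_0
    (hcompat : ∀ n, ∃ y ∈ A0, a (n + 1) - a n = t ^ n * y)
    -- the image of `a` under Ĵ_j vanishes
    (hker : ∀ n, ∃ b ∈ Aj j, a n = (τ j : A) ^ n * b) :
    -- then `a` vanishes in Â
    ∀ n, ∃ y ∈ A0, a n = t ^ n * y := by
  set τN : Fin k → R.unitsNormalizer := fun i =>
    ⟨τ i, R.mem_unitsNormalizer_of_conj _ (σ i) (hσ i)⟩
  have hcommN : ∀ i j,
      (((τN i * τN j * (τN i)⁻¹ * (τN j)⁻¹ : R.unitsNormalizer) : Aˣ) : A) ∈ R := hcomm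
  obtain rfl : mL = twistedMonomial τN :=
    funext fun I => by rw [hmL, twistedMonomial, coe_twistedMonomialUnit]
  obtain rfl : t = twistedMonomial τN (Finsupp.equivFunOnFinite.symm 1) := by
    simp [ht, coe_twistedMonomialUnit, τN]
  obtain rfl := hA0.trans (R.setOf_exists_sum_mul_eq _ _)
  rw [(hAj j).trans (R.setOf_exists_sum_mul_eq _ _)] at hker
  set b := Module.Basis.ofExistsUnique (R := R) (twistedMonomial τN) fun x => by
    simpa [Finsupp.linearCombination_apply, Subring.smul_def, eq_comm] using hbasis x
  have hspan (s x) : x ∈ span R (twistedMonomial τN '' s) ↔ ↑(b.repr x).support ⊆ s := by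
    rw [← b.mem_span_image, Module.Basis.coe_ofExistsUnique]
  have hsupp := Finsupp.support_subset_setOf_forall_le (fun n => b.repr (a n)) j
    (fun n => by
      obtain ⟨y, hy, hay⟩ := hcompat n
      rw [← map_sub, hay, ← hspan]
      exact twistedMonomial_one_pow_mul_mem_span hcommN n hy)
    (fun n => by
      obtain ⟨y, hy, hay⟩ := hker n
      rw [← hspan, hay]
      exact pow_mul_mem_span_twistedMonomial hcommN j n hy)
  exact fun n => exists_eq_twistedMonomial_one_pow_mul hcommN n ((hspan _ _).2 (hsupp n))

/-- In the setting of a `Σ`-twisted Laurent polynomial ring `A` over `R`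
with twisted polynomial subring `A_0` and subrings `A_j` spanned by the monomials with
`i_j ≥ 0`, the natural ring homomorphism `Ĵ_j : Â = lim← A_0/τ^n → Â_j = lim← A_j/τ_j^n`
is injective for every `j`. Element-wise: a compatible sequence in `A_0` (modulo
`τ^n A_0`) whose components all vanish in `A_j/τ_j^n A_j` vanishes in the limit. -/
theorem stmt16 {A : Type*} [Ring A] (k : ℕ) (R : Subring A) (σ : Fin k → (R ≃+* R))
    (τ : Fin k → Aˣ)
    (hcomm : ∀ i j, ((τ i * τ j * (τ i)⁻¹ * (τ j)⁻¹ : Aˣ) : A) ∈ R)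
    (hσ : ∀ i (r : R), (τ i : A) * (r : A) * ((τ i)⁻¹ : Aˣ) = ((σ i r : R) : A))
    (mL : (Fin k →₀ ℤ) → A)
    (hmL : ∀ I, mL I = ((List.ofFn fun i => τ i ^ I i).prod : Aˣ))
    (hbasis : ∀ a : A, ∃! c : (Fin k →₀ ℤ) →₀ R,
      a = c.sum fun I r => (r : A) * mL I)
    (A0 : Set A)
    (hA0 : A0 = {a | ∃ c : (Fin k →₀ ℤ) →₀ R,
      (∀ I ∈ c.support, ∀ j, 0 ≤ I j) ∧ a = c.sum fun I r => (r : A) * mL I})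
    (Aj : Fin k → Set A)
    (hAj : ∀ j, Aj j = {a | ∃ c : (Fin k →₀ ℤ) →₀ R,
      (∀ I ∈ c.support, 0 ≤ I j) ∧ a = c.sum fun I r => (r : A) * mL I})
    (t : A) (ht : t = ((List.ofFn fun i => τ i).prod : Aˣ))
    (j : Fin k) (a : ℕ → A)
    -- `a` represents an element of Â : components in A_0, compatible modulo τ^n A_0
    (ha0 : ∀ n, a n ∈ A0)
    (hcompat : ∀ n, ∃ y ∈ A0, a (n + 1) - a n = t ^ n * y)
    -- the image of `a` under Ĵ_j vanishes
    (hker : ∀ n, ∃ b ∈ Aj j, a n = (τ j : A) ^ n * b) :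
    -- then `a` vanishes in Â
    ∀ n, ∃ y ∈ A0, a n = t ^ n * y :=
  stmt16_general k R σ τ hcomm hσ mL hmL hbasis A0 hA0 Aj hAj t ht j a hcompat hker
end

section
/- Let ξ: Z^k → R be a monomorphism and Γ = (ξ_1, ..., ξ_k) a ξ-regular family. Let (t_1, ..., t_k) be the basis of Z^k dual to the basis (−ξ_1, ..., −ξ_k) of Hom(Z^k, Z), and Λ = Z[Z^k]. Then the conical completion Λ̂_Γ^- = ∩_i Λ̂_{ξ_i}^- is isomorphic to the ring Z[[[t_1, ..., t_k]]] of special power series in t_1, ..., t_k, and Λ̂_Γ = ∩_i Λ̂_{ξ_i} is isomorphic to the ring of special Laurent series. -/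
/-- The Novikov condition for formal series over the group `ℤ^k` (written additively)
with respect to a homomorphism `ξ : ℤ^k → ℝ`. -/
def NovCond18 (k : ℕ) (ξ : (Fin k → ℤ) → ℝ) (lam : (Fin k → ℤ) → ℤ) : Prop :=
  ∀ C : ℝ, {g : Fin k → ℤ | lam g ≠ 0 ∧ C ≤ ξ g}.Finite

/-- Convolution product of formal series over the group `ℤ^k`. -/
noncomputable def NovMul18 (k : ℕ) (lam mu : (Fin k → ℤ) → ℤ) : (Fin k → ℤ) → ℤ :=
  fun u => ∑ᶠ g : Fin k → ℤ, lam g * mu (u - g)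

/-!
Let `W = (w_ij)` and let `T` have rows `t_j`. Duality says `W Tᵀ = -1`, hence also `Tᵀ W = -1`,
so `I ↦ Σ_j I_j t_j = Tᵀ I` is an automorphism of `ℤ^k` (with inverse `g ↦ -W g`) and `Φ` is
reindexing along it. In the coordinates `I` the form `ξ_i` becomes `-I_i`: the Novikov
condition for `ξ_i` says that the support has only finitely many `I` with `I_i ≤ m`, and the
sign condition defining `Λ̂_Γ⁻` says `I_i ≥ 0`. Reindexing along a group automorphism commutes
with convolution.
-/

open Matrix

section MulEqNegOne

variable {n R : Type*} [Fintype n] [DecidableEq n] [CommRing R] {A B : Matrix n n R}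

theorem Matrix.mul_eq_neg_one_comm (h : A * B = -1) : B * A = -1 := by
  have h' : A * -B = 1 := by rw [Matrix.mul_neg, h, neg_neg]
  rw [← neg_neg (B * A), ← Matrix.neg_mul, mul_eq_one_comm.mp h']

theorem Matrix.mulVec_mulVec_of_mul_eq_neg_one (h : A * B = -1) (v : n → R) :
    A *ᵥ (B *ᵥ v) = -v := by
  rw [mulVec_mulVec, h, neg_mulVec, one_mulVec]

def Matrix.mulVecAddEquivOfMulEqNegOne (h : A * B = -1) : (n → R) ≃+ (n → R) where
  toFun := (B *ᵥ ·)
  invFun v := -(A *ᵥ v)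
  left_inv v := by simp only [mulVec_mulVec_of_mul_eq_neg_one h, neg_neg]
  right_inv v := by
    simp only [mulVec_neg, mulVec_mulVec_of_mul_eq_neg_one (mul_eq_neg_one_comm h), neg_neg]
  map_add' := mulVec_add B

@[simp]
theorem Matrix.mulVecAddEquivOfMulEqNegOne_apply (h : A * B = -1) (v : n → R) :
    mulVecAddEquivOfMulEqNegOne h v = B *ᵥ v :=
  rfl

end MulEqNegOne

theorem Set.finite_preimage_equivLike_iff {α β F : Type*} [EquivLike F α β] (e : F)
    {s : Set β} : (e ⁻¹' s).Finite ↔ s.Finite :=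
  ⟨fun h => h.of_preimage (EquivLike.surjective e),
    fun h => h.preimage (EquivLike.injective e).injOn⟩

theorem Set.image_comp_equiv_eq {α β γ : Type*} (e : α ≃ β) {s : Set (β → γ)}
    {t : Set (α → γ)} (h : ∀ f, f ∈ s ↔ f ∘ e ∈ t) : (· ∘ e) '' s = t := by
  ext d
  refine ⟨?_, fun hd => ⟨d ∘ e.symm, (h _).2 ?_, ?_⟩⟩
  · rintro ⟨f, hf, rfl⟩
    exact (h f).1 hf
  · simpa [Function.comp_assoc] using hd
  · simp [Function.comp_assoc]

theorem finite_setOf_real_le_iff {α : Type*} (p : α → Prop) (f : α → ℤ) :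
    (∀ C : ℝ, {x | p x ∧ C ≤ f x}.Finite) ↔ ∀ m : ℤ, {x | p x ∧ m ≤ f x}.Finite := by
  refine ⟨fun h m => by simpa using h m, fun h C => ?_⟩
  simpa [Int.ceil_le] using h ⌈C⌉

theorem finite_setOf_exists_le_iff {ι : Type*} [Finite ι] (p : (ι → ℤ) → Prop) :
    (∀ m : ℤ, {I : ι → ℤ | (∃ j, I j ≤ m) ∧ p I}.Finite) ↔
      ∀ j (m : ℤ), {I : ι → ℤ | p I ∧ I j ≤ m}.Finite := by
  refine ⟨fun h j m => (h m).subset fun I hI => ⟨⟨j, hI.2⟩, hI.1⟩, fun h m => ?_⟩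
  refine (Set.finite_iUnion fun j => h j m).subset ?_
  rintro I ⟨⟨j, hj⟩, hp⟩
  exact Set.mem_iUnion.2 ⟨j, hp, hj⟩

section Reindexing

variable {k : ℕ} {A B : Matrix (Fin k) (Fin k) ℤ}

theorem forall_novCond18_mulVec_iff (h : A * B = -1) (lam : (Fin k → ℤ) → ℤ) :
    (∀ i, NovCond18 k (fun g => ((A *ᵥ g) i : ℝ)) lam) ↔
      ∀ m : ℤ, {I | (∃ j, I j ≤ m) ∧ lam (B *ᵥ I) ≠ 0}.Finite := by
  have hpre : ∀ i m, {I | lam (B *ᵥ I) ≠ 0 ∧ I i ≤ m} =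
      mulVecAddEquivOfMulEqNegOne h ⁻¹' {g | lam g ≠ 0 ∧ -m ≤ (A *ᵥ g) i} := by
    intro i m
    ext I
    simp [mulVec_mulVec_of_mul_eq_neg_one h]
  simp only [NovCond18, finite_setOf_real_le_iff, finite_setOf_exists_le_iff, hpre,
    Set.finite_preimage_equivLike_iff]
  exact ⟨fun h i m => h i (-m), fun h i m => by simpa using h i (-m)⟩

theorem forall_mulVec_nonpos_iff (h : A * B = -1) (lam : (Fin k → ℤ) → ℤ) :
    (∀ g, lam g ≠ 0 → ∀ i, (A *ᵥ g) i ≤ 0) ↔ ∀ I, lam (B *ᵥ I) ≠ 0 → ∀ j, 0 ≤ I j := by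
  rw [(mulVecAddEquivOfMulEqNegOne h).toEquiv.symm.forall_congr_left]
  simp [mulVec_mulVec_of_mul_eq_neg_one h]

end Reindexing

theorem novMul18_comp_addEquiv {k : ℕ} (e : (Fin k → ℤ) ≃+ (Fin k → ℤ))
    (lam mu : (Fin k → ℤ) → ℤ) :
    NovMul18 k lam mu ∘ e = NovMul18 k (lam ∘ e) (mu ∘ e) := by
  funext I
  simp only [NovMul18, Function.comp_apply, map_sub]
  exact (finsum_comp_equiv e.toEquiv (f := fun g => lam g * mu (e I - g))).symm

theorem stmt18_general (k : ℕ) (w : Fin k → Fin k → ℤ)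
    (t : Fin k → Fin k → ℤ)
    (ht : ∀ i j, ∑ l, w i l * t j l = if i = j then -1 else 0) :
    -- the reindexing map Φ
    let Φ : ((Fin k → ℤ) → ℤ) → ((Fin k → ℤ) → ℤ) :=
      fun lam => fun I => lam (∑ j, I j • t j)
    -- the conical completions
    let ΛΓ : Set ((Fin k → ℤ) → ℤ) :=
      {lam | ∀ i, NovCond18 k (fun g => ((∑ j, w i j * g j : ℤ) : ℝ)) lam}
    let ΛΓm : Set ((Fin k → ℤ) → ℤ) :=
      {lam | lam ∈ ΛΓ ∧ ∀ g, lam g ≠ 0 → ∀ i, (∑ j, w i j * g j : ℤ) ≤ 0}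
    -- special Laurent series (indices in ℤ^k, all coordinates → +∞)
    let SLau : Set ((Fin k → ℤ) → ℤ) :=
      {d | ∀ m : ℤ, {I : Fin k → ℤ | (∃ j, I j ≤ m) ∧ d I ≠ 0}.Finite}
    -- special power series (indices in ℕ^k ⊆ ℤ^k)
    let SPow : Set ((Fin k → ℤ) → ℤ) :=
      {d | d ∈ SLau ∧ ∀ I, d I ≠ 0 → ∀ j, 0 ≤ I j}
    -- Φ identifies Λ̂_Γ with the special Laurent series and Λ̂_Γ⁻ with the special
    -- power series, compatibly with the ring structures
    (Φ '' ΛΓ = SLau) ∧ (Φ '' ΛΓm = SPow) ∧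
    (∀ lam mu, Φ (lam + mu) = Φ lam + Φ mu) ∧
    (∀ lam mu, lam ∈ ΛΓ → mu ∈ ΛΓ →
      Φ (NovMul18 k lam mu) = NovMul18 k (Φ lam) (Φ mu)) := by
  intro Φ ΛΓ ΛΓm SLau SPow
  have hwt : of w * (of t)ᵀ = -1 := by
    ext i j
    simpa [mul_apply, one_apply, apply_ite] using ht i j
  set e := mulVecAddEquivOfMulEqNegOne hwt
  have hΦ : Φ = (· ∘ e) := by
    funext lam I
    show lam _ = lam ((of t)ᵀ *ᵥ I)
    rw [mulVec_transpose, vecMul_eq_sum]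
    rfl
  have hΛΓ : ∀ lam, lam ∈ ΛΓ ↔ lam ∘ e ∈ SLau := forall_novCond18_mulVec_iff hwt
  refine ⟨?_, ?_, fun _ _ => rfl, fun lam mu _ _ => ?_⟩
  · rw [hΦ]
    exact Set.image_comp_equiv_eq e.toEquiv hΛΓ
  · rw [hΦ]
    exact Set.image_comp_equiv_eq e.toEquiv fun lam =>
      and_congr (hΛΓ lam) (forall_mulVec_nonpos_iff hwt lam)
  · rw [hΦ]
    exact novMul18_comp_addEquiv e lam mu

/-- Let `ξ : ℤ^k → ℝ` be a monomorphism and `Γ = (ξ_1, ..., ξ_k)` a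
`ξ`-regular family (rows of a unimodular matrix `w`, with `ξ = Σ c_i ξ_i`, `c_i > 0`).
Let `(t_1, ..., t_k)` be the basis of `ℤ^k` dual to `(−ξ_1, ..., −ξ_k)`.
Then reindexing by the basis `t` (i.e. `λ ↦ (I ↦ λ(Σ_j I_j t_j))`) identifies
`Λ̂_Γ⁻ = ∩_i Λ̂_{ξ_i}⁻` with the ring `ℤ[[[t_1, ..., t_k]]]` of special power series
and `Λ̂_Γ = ∩_i Λ̂_{ξ_i}` with the ring of special Laurent series, compatibly with
addition and (convolution) multiplication. -/
theorem stmt18 (k : ℕ) (w : Fin k → Fin k → ℤ) (hw : IsUnit (Matrix.of w).det)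
    (c : Fin k → ℝ) (hc : ∀ i, 0 < c i)
    (ξ : (Fin k → ℤ) → ℝ)
    (hξ : ∀ x, ξ x = ∑ i, c i * ∑ j, (w i j : ℝ) * (x j : ℝ))
    (hξinj : Function.Injective ξ)
    (t : Fin k → Fin k → ℤ)
    (ht : ∀ i j, ∑ l, w i l * t j l = if i = j then -1 else 0) :
    -- the reindexing map Φ
    let Φ : ((Fin k → ℤ) → ℤ) → ((Fin k → ℤ) → ℤ) :=
      fun lam => fun I => lam (∑ j, I j • t j)
    -- the conical completions
    let ΛΓ : Set ((Fin k → ℤ) → ℤ) :=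
      {lam | ∀ i, NovCond18 k (fun g => ((∑ j, w i j * g j : ℤ) : ℝ)) lam}
    let ΛΓm : Set ((Fin k → ℤ) → ℤ) :=
      {lam | lam ∈ ΛΓ ∧ ∀ g, lam g ≠ 0 → ∀ i, (∑ j, w i j * g j : ℤ) ≤ 0}
    -- special Laurent series (indices in ℤ^k, all coordinates → +∞)
    let SLau : Set ((Fin k → ℤ) → ℤ) :=
      {d | ∀ m : ℤ, {I : Fin k → ℤ | (∃ j, I j ≤ m) ∧ d I ≠ 0}.Finite}
    -- special power series (indices in ℕ^k ⊆ ℤ^k)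
    let SPow : Set ((Fin k → ℤ) → ℤ) :=
      {d | d ∈ SLau ∧ ∀ I, d I ≠ 0 → ∀ j, 0 ≤ I j}
    -- Φ identifies Λ̂_Γ with the special Laurent series and Λ̂_Γ⁻ with the special
    -- power series, compatibly with the ring structures
    (Φ '' ΛΓ = SLau) ∧ (Φ '' ΛΓm = SPow) ∧
    (∀ lam mu, Φ (lam + mu) = Φ lam + Φ mu) ∧
    (∀ lam mu, lam ∈ ΛΓ → mu ∈ ΛΓ →
      Φ (NovMul18 k lam mu) = NovMul18 k (Φ lam) (Φ mu)) :=
  stmt18_general k w t ht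
end
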